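/- arXiv:1609.05934 — 6 statements merged into one kernel-verified Lean document; each statement's English description precedes it below -/
import Mathlib

section
/- Let G be a finite simple graph, k ≥ 1, v a vertex of G, and c, q two distinct colours in {1,…,k}. Then the map sending a proper k-colouring σ with σ(v) = c to the q-switching of σ at v is a bijection from the set {σ : σ is a proper k-colouring of G with σ(v) = c} onto the set {σ : σ is a proper k-colouring of G with σ(v) = q}. -/
open scoped Classical

/-- A proper `k`-colouring of a graph `G`: a map to `Fin k` giving distinct
colours to adjacent vertices. -/
def IsProperColoring {V : Type*} (G : SimpleGraph V) {k : ℕ} (σ : V → Fin k) : Prop :=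
  ∀ ⦃x y : V⦄, G.Adj x y → σ x ≠ σ y

/-- The vertex set of the disagreement graph `Q(G, v, σ, q)`. -/
def disagreementSet {V : Type*} (G : SimpleGraph V) {k : ℕ} (v : V) (σ : V → Fin k)
    (q : Fin k) : Set V :=
  {x | ∃ p : G.Walk v x, ∀ w ∈ p.support, σ w = σ v ∨ σ w = q}

/-- The `q`-switching of `σ` at `v`. -/
noncomputable def switching {V : Type*} (G : SimpleGraph V) {k : ℕ} (v : V) (σ : V → Fin k)
    (q : Fin k) : V → Fin k := fun x =>
  if x ∈ disagreementSet G v σ q then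
    (if σ x = σ v then q else if σ x = q then σ v else σ x)
  else σ x

section Aux

variable {V : Type*} (G : SimpleGraph V) {k : ℕ}

lemma mem_disagreement_self (v : V) (σ : V → Fin k) (q : Fin k) :
    v ∈ disagreementSet G v σ q :=
  ⟨SimpleGraph.Walk.nil, by simp⟩

lemma switching_eq_swap {v : V} {σ : V → Fin k} {q : Fin k} {x : V}
    (hx : x ∈ disagreementSet G v σ q) :
    switching G v σ q x = Equiv.swap (σ v) q (σ x) := by
  simp [switching, hx, Equiv.swap_apply_def]

lemma switching_eq_self {v : V} {σ : V → Fin k} {q : Fin k} {x : V}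
    (hx : x ∉ disagreementSet G v σ q) : switching G v σ q x = σ x := by
  simp [switching, hx]

lemma switching_apply_v (v : V) (σ : V → Fin k) (q : Fin k) :
    switching G v σ q v = q := by
  rw [switching_eq_swap G (mem_disagreement_self G v σ q), Equiv.swap_apply_left]

lemma adj_mem_disagreement {v : V} {σ : V → Fin k} {q : Fin k} {x y : V}
    (hx : x ∈ disagreementSet G v σ q) (hxy : G.Adj x y)
    (hy : σ y = σ v ∨ σ y = q) : y ∈ disagreementSet G v σ q := by
  obtain ⟨p, hp⟩ := hx
  refine ⟨p.concat hxy, ?_⟩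
  intro w hw
  rw [SimpleGraph.Walk.support_concat, List.mem_append,
    List.mem_singleton] at hw
  rcases hw with hw | hw
  · exact hp w hw
  · subst hw; exact hy

lemma switching_colour_iff {v : V} (σ : V → Fin k) (q : Fin k) (x : V) :
    (switching G v σ q x = σ v ∨ switching G v σ q x = q) ↔ (σ x = σ v ∨ σ x = q) := by
  by_cases hx : x ∈ disagreementSet G v σ q
  · rw [switching_eq_swap G hx]
    constructor
    · rintro (h | h)
      · right
        have : Equiv.swap (σ v) q (σ x) = Equiv.swap (σ v) q q := by
          rw [Equiv.swap_apply_right]; exact h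
        exact (Equiv.swap (σ v) q).injective this
      · left
        have : Equiv.swap (σ v) q (σ x) = Equiv.swap (σ v) q (σ v) := by
          rw [Equiv.swap_apply_left]; exact h
        exact (Equiv.swap (σ v) q).injective this
    · rintro (h | h)
      · right; rw [h, Equiv.swap_apply_left]
      · left; rw [h, Equiv.swap_apply_right]
  · rw [switching_eq_self G hx]

lemma disagreement_switch (v : V) (σ : V → Fin k) (q : Fin k) :
    disagreementSet G v (switching G v σ q) (σ v) = disagreementSet G v σ q := by
  have hv : switching G v σ q v = q := switching_apply_v G v σ q
  ext x
  constructor <;> rintro ⟨p, hp⟩ <;> refine ⟨p, fun w hw => ?_⟩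
  · have h := hp w hw
    rw [hv] at h
    exact (switching_colour_iff G σ q w).mp h.symm
  · have h := (switching_colour_iff G σ q w).mpr (hp w hw)
    rw [hv]
    exact h.symm

lemma switch_switch (v : V) (σ : V → Fin k) (q : Fin k) :
    switching G v (switching G v σ q) (σ v) = σ := by
  funext x
  by_cases hx : x ∈ disagreementSet G v σ q
  · have hx' : x ∈ disagreementSet G v (switching G v σ q) (σ v) := by
      rw [disagreement_switch]; exact hx
    rw [switching_eq_swap G hx', switching_apply_v G v σ q, switching_eq_swap G hx,
      Equiv.swap_comm, Equiv.swap_apply_self]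
  · have hx' : x ∉ disagreementSet G v (switching G v σ q) (σ v) := by
      rw [disagreement_switch]; exact hx
    rw [switching_eq_self G hx', switching_eq_self G hx]

lemma switching_proper {v : V} {σ : V → Fin k} {q : Fin k}
    (hσ : IsProperColoring G σ) : IsProperColoring G (switching G v σ q) := by
  intro x y hxy heq
  by_cases hx : x ∈ disagreementSet G v σ q <;> by_cases hy : y ∈ disagreementSet G v σ q
  · rw [switching_eq_swap G hx, switching_eq_swap G hy] at heq
    exact hσ hxy ((Equiv.swap (σ v) q).injective heq)
  · rw [switching_eq_swap G hx, switching_eq_self G hy] at heq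
    have hyc : ¬(σ y = σ v ∨ σ y = q) := fun h => hy (adj_mem_disagreement G hx hxy h)
    push_neg at hyc
    have h2 : σ x = Equiv.swap (σ v) q (σ y) := by
      rw [← heq, Equiv.swap_apply_self]
    rw [Equiv.swap_apply_of_ne_of_ne hyc.1 hyc.2] at h2
    exact hσ hxy h2
  · rw [switching_eq_self G hx, switching_eq_swap G hy] at heq
    have hxc : ¬(σ x = σ v ∨ σ x = q) := fun h => hx (adj_mem_disagreement G hy hxy.symm h)
    push_neg at hxc
    have h2 : Equiv.swap (σ v) q (σ x) = σ y := by
      rw [heq, Equiv.swap_apply_self]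
    rw [Equiv.swap_apply_of_ne_of_ne hxc.1 hxc.2] at h2
    exact hσ hxy h2
  · rw [switching_eq_self G hx, switching_eq_self G hy] at heq
    exact hσ hxy heq

end Aux

/-- For a finite graph `G`, a vertex `v` and distinct colours `c, q`, the map
`σ ↦ q`-switching of `σ` at `v` is a bijection from the proper `k`-colourings with
`σ v = c` onto the proper `k`-colourings with `σ v = q`. -/


theorem switching_bijOn {V : Type*} [Fintype V] (G : SimpleGraph V) {k : ℕ}
    (hk : 1 ≤ k) (v : V) (c q : Fin k) (hcq : c ≠ q) :
    Set.BijOn (fun σ : V → Fin k => switching G v σ q)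
      {σ : V → Fin k | IsProperColoring G σ ∧ σ v = c}
      {σ : V → Fin k | IsProperColoring G σ ∧ σ v = q} := by
  apply Set.InvOn.bijOn (f' := fun σ : V → Fin k => switching G v σ c)
  · constructor
    · intro σ hσ
      have hc : σ v = c := hσ.2
      simpa [← hc] using switch_switch G v σ q
    · intro σ hσ
      have hq : σ v = q := hσ.2
      simpa [← hq] using switch_switch G v σ c
  · intro σ hσ
    exact ⟨switching_proper G hσ.1, switching_apply_v G v σ q⟩
  · intro σ hσ
    exact ⟨switching_proper G hσ.1, switching_apply_v G v σ c⟩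
end

section
/- Let U be a finite set, let A, B ⊆ U be nonempty subsets, let A' ⊆ A and B' ⊆ B, and let f : U → U be a map such that f restricts to a bijection from A \ A' onto B \ B' and f(A') ∩ B = ∅. Let Z be chosen uniformly at random from A. Then the total variation distance between the law of f(Z) and the uniform distribution on B is at most max(|A'|/|A|, |B'|/|B|). -/
lemma tv_key (n m a' b' c j k : ℝ) (hn : 0 < n) (hm : 0 < m)
    (hca : c ≤ a') (hc0 : 0 ≤ c) (hjb : j ≤ b') (hj0 : 0 ≤ j)
    (hk : k ≤ m - b') (hk0 : 0 ≤ k)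
    (heq : n - a' = m - b') :
    |(k + c) / n - (k + j) / m| ≤ max (a' / n) (b' / m) := by
  rw [abs_le]
  have hnm : 0 < n * m := mul_pos hn hm
  rcases le_total n m with h | h
  · refine ⟨le_trans (neg_le_neg (le_max_right _ _)) ?_, le_trans ?_ (le_max_right _ _)⟩
    · rw [div_sub_div _ _ hn.ne' hm.ne', neg_le, ← neg_div, ← neg_sub,
        div_le_div_iff₀ hnm hm]
      have h1 : n * (k + j) - (k + c) * m ≤ b' * n := by
        nlinarith [mul_le_mul_of_nonneg_right hjb hn.le, mul_nonneg hk0 (sub_nonneg.2 h),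
          mul_nonneg hc0 hm.le]
      nlinarith [mul_le_mul_of_nonneg_right h1 hm.le]
    · rw [div_sub_div _ _ hn.ne' hm.ne', div_le_div_iff₀ hnm hm]
      have h1 : (k + c) * m - n * (k + j) ≤ b' * n := by
        nlinarith [mul_le_mul_of_nonneg_right hk (sub_nonneg.2 h),
          mul_le_mul_of_nonneg_right hca hm.le, mul_nonneg hj0 hn.le]
      nlinarith [mul_le_mul_of_nonneg_right h1 hm.le]
  · refine ⟨le_trans (neg_le_neg (le_max_left _ _)) ?_, le_trans ?_ (le_max_left _ _)⟩
    · rw [div_sub_div _ _ hn.ne' hm.ne', neg_le, ← neg_div, ← neg_sub,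
        div_le_div_iff₀ hnm hn]
      have h1 : n * (k + j) - (k + c) * m ≤ a' * m := by
        nlinarith [mul_le_mul_of_nonneg_right hk (sub_nonneg.2 h),
          mul_le_mul_of_nonneg_right hjb hn.le, mul_nonneg hc0 hm.le]
      nlinarith [mul_le_mul_of_nonneg_right h1 hn.le]
    · rw [div_sub_div _ _ hn.ne' hm.ne', div_le_div_iff₀ hnm hn]
      have h1 : (k + c) * m - n * (k + j) ≤ a' * m := by
        nlinarith [mul_le_mul_of_nonneg_right hca hm.le, mul_nonneg hj0 hn.le,
          mul_nonneg hk0 (sub_nonneg.2 h)]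
      nlinarith [mul_le_mul_of_nonneg_right h1 hn.le]

/-- Let `U` be a finite set, `A, B ⊆ U` nonempty, `A' ⊆ A`, `B' ⊆ B`, and let
`f : U → U` restrict to a bijection from `A \ A'` onto `B \ B'` with `f(A') ∩ B = ∅`.
If `Z` is uniformly random in `A`, then the total variation distance between the law of
`f Z` and the uniform distribution on `B` is at most `max (|A'|/|A|) (|B'|/|B|)`; i.e.
for every subset `S ⊆ U` the difference of the probabilities that `f Z ∈ S` and that a
uniform element of `B` lies in `S` is bounded by `max (|A'|/|A|) (|B'|/|B|)`. -/
theorem tv_le_of_approx_bijection {U : Type*} [Fintype U] [DecidableEq U]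
    (A B A' B' : Finset U) (hA : A.Nonempty) (hB : B.Nonempty)
    (hA' : A' ⊆ A) (hB' : B' ⊆ B) (f : U → U)
    (hbij : Set.BijOn f ((A \ A' : Finset U) : Set U) ((B \ B' : Finset U) : Set U))
    (hout : ∀ a ∈ A', f a ∉ B) :
    ∀ S : Finset U,
      |((A.filter fun a => f a ∈ S).card : ℝ) / (A.card : ℝ) -
          ((B ∩ S).card : ℝ) / (B.card : ℝ)| ≤
        max ((A'.card : ℝ) / (A.card : ℝ)) ((B'.card : ℝ) / (B.card : ℝ)) := by
  intro S
  have hcard : (A \ A').card = (B \ B').card := by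
    apply Finset.card_bij (fun a _ => f a)
    · intro a ha
      exact_mod_cast hbij.mapsTo (by exact_mod_cast ha)
    · intro a ha b hb hfab
      exact hbij.injOn (by exact_mod_cast ha) (by exact_mod_cast hb) hfab
    · intro b hb
      obtain ⟨a, ha, hfa⟩ :=
        hbij.surjOn (by exact_mod_cast hb : (b : U) ∈ ((B \ B' : Finset U) : Set U))
      exact ⟨a, by exact_mod_cast ha, hfa⟩
  have hfilt : ((A \ A').filter (fun a => f a ∈ S)).card = ((B \ B') ∩ S).card := by
    apply Finset.card_bij (fun a _ => f a)
    · intro a ha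
      rw [Finset.mem_filter] at ha
      exact Finset.mem_inter.2 ⟨by exact_mod_cast hbij.mapsTo (by exact_mod_cast ha.1), ha.2⟩
    · intro a ha b hb hfab
      rw [Finset.mem_filter] at ha hb
      exact hbij.injOn (by exact_mod_cast ha.1) (by exact_mod_cast hb.1) hfab
    · intro b hb
      rw [Finset.mem_inter] at hb
      obtain ⟨a, ha, rfl⟩ :=
        hbij.surjOn (by exact_mod_cast hb.1 : (b : U) ∈ ((B \ B' : Finset U) : Set U))
      exact ⟨a, Finset.mem_filter.2 ⟨by exact_mod_cast ha, hb.2⟩, rfl⟩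
  have hsplit : (A.filter (fun a => f a ∈ S)).card
      = ((A \ A').filter (fun a => f a ∈ S)).card + (A'.filter (fun a => f a ∈ S)).card := by
    rw [← Finset.card_union_of_disjoint (Finset.disjoint_filter_filter Finset.sdiff_disjoint),
      ← Finset.filter_union, Finset.sdiff_union_of_subset hA']
  have hBS : (B ∩ S).card = ((B \ B') ∩ S).card + (B' ∩ S).card := by
    rw [← Finset.card_union_of_disjoint
        (Finset.disjoint_of_subset_left Finset.inter_subset_left
          (Finset.disjoint_of_subset_right Finset.inter_subset_left Finset.sdiff_disjoint)),
      ← Finset.union_inter_distrib_right, Finset.sdiff_union_of_subset hB']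
  have hn : (0 : ℝ) < A.card := by exact_mod_cast hA.card_pos
  have hm : (0 : ℝ) < B.card := by exact_mod_cast hB.card_pos
  have heq : (A.card : ℝ) - A'.card = (B.card : ℝ) - B'.card := by
    rw [← Nat.cast_sub (Finset.card_le_card hA'), ← Nat.cast_sub (Finset.card_le_card hB'),
      ← Finset.card_sdiff_of_subset hA', ← Finset.card_sdiff_of_subset hB', hcard]
  have hca : ((A'.filter (fun a => f a ∈ S)).card : ℝ) ≤ A'.card := by
    exact_mod_cast Finset.card_le_card (Finset.filter_subset _ _)
  have hjb : (((B' ∩ S)).card : ℝ) ≤ B'.card := by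
    exact_mod_cast Finset.card_le_card Finset.inter_subset_left
  have hk : ((((B \ B') ∩ S)).card : ℝ) ≤ (B.card : ℝ) - B'.card := by
    rw [← Nat.cast_sub (Finset.card_le_card hB'), ← Finset.card_sdiff_of_subset hB']
    exact_mod_cast Finset.card_le_card Finset.inter_subset_left
  rw [hsplit, hfilt, hBS]
  push_cast
  exact tv_key _ _ _ _ _ _ _ hn hm hca (Nat.cast_nonneg _) hjb (Nat.cast_nonneg _)
    hk (Nat.cast_nonneg _) heq
end

section
/- Let G be a finite simple graph, k ≥ 2, and v, u two distinct non-adjacent vertices of G. Assume the set of proper k-colourings of G is nonempty and that the set of good colourings (proper k-colourings σ with σ(v) ≠ σ(u)) is nonempty. Let α ∈ [0,1] be such that for every pair of distinct colours c, q ∈ {1,…,k}: |S_q(c,c)| ≥ (1−α)·|Ω(c,c)| and |S_c(q,c)| ≥ (1−α)·|Ω(q,c)|. Let ν be the uniform distribution on the good colourings, and let ν' be the distribution of the output of Update(G,v,u,·,k) when its input is a uniformly random proper k-colouring of G. Then ||ν − ν'|| ≤ α. -/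
open scoped Classical

/-- There exists a path in `G` from `v` to `u` all of whose vertices get colours
in `{c, q}` under `σ`. -/
def TwoColouredPath {V : Type*} (G : SimpleGraph V) {k : ℕ} (σ : V → Fin k)
    (v u : V) (c q : Fin k) : Prop :=
  ∃ p : G.Walk v u, ∀ w ∈ p.support, σ w = c ∨ σ w = q

namespace UpdateAux

section Switching

variable {V : Type*} {G : SimpleGraph V} {k : ℕ} {v u : V} {σ : V → Fin k} {q : Fin k}

lemma self_mem (G : SimpleGraph V) (v : V) (σ : V → Fin k) (q : Fin k) :
    v ∈ disagreementSet G v σ q :=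
  ⟨SimpleGraph.Walk.nil, by simp⟩

lemma colour_of_mem {x : V} (hx : x ∈ disagreementSet G v σ q) :
    σ x = σ v ∨ σ x = q := by
  obtain ⟨p, hp⟩ := hx
  exact hp x p.end_mem_support

lemma switching_eq (G : SimpleGraph V) (v : V) (σ : V → Fin k) (q : Fin k) (x : V) :
    switching G v σ q x =
      if x ∈ disagreementSet G v σ q then Equiv.swap (σ v) q (σ x) else σ x := by
  simp only [switching, Equiv.swap_apply_def]

lemma switching_v (G : SimpleGraph V) (v : V) (σ : V → Fin k) (q : Fin k) :
    switching G v σ q v = q := by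
  rw [switching_eq, if_pos (self_mem G v σ q), Equiv.swap_apply_left]

lemma switching_of_not_mem {x : V} (hx : x ∉ disagreementSet G v σ q) :
    switching G v σ q x = σ x := by
  rw [switching_eq, if_neg hx]

lemma mem_extend {x y : V} (hx : x ∈ disagreementSet G v σ q) (hxy : G.Adj x y)
    (hy : σ y = σ v ∨ σ y = q) : y ∈ disagreementSet G v σ q := by
  obtain ⟨p, hp⟩ := hx
  refine ⟨p.concat hxy, ?_⟩
  intro w hw
  rw [SimpleGraph.Walk.support_concat] at hw
  simp only [List.concat_eq_append, List.mem_append, List.mem_singleton] at hw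
  rcases hw with hw | hw
  · exact hp w hw
  · subst hw; exact hy

lemma switching_colour_iff (G : SimpleGraph V) (v : V) (σ : V → Fin k) (q : Fin k) (x : V) :
    (switching G v σ q x = σ v ∨ switching G v σ q x = q) ↔ (σ x = σ v ∨ σ x = q) := by
  rw [switching_eq]
  split_ifs with h
  · rcases colour_of_mem h with h1 | h1 <;> simp [h1]
  · exact Iff.rfl

lemma switching_proper (hσ : IsProperColoring G σ) :
    IsProperColoring G (switching G v σ q) := by
  intro x y hxy heq
  rw [switching_eq, switching_eq] at heq
  by_cases hx : x ∈ disagreementSet G v σ q <;>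
    by_cases hy : y ∈ disagreementSet G v σ q
  · rw [if_pos hx, if_pos hy] at heq
    exact hσ hxy ((Equiv.swap (σ v) q).injective heq)
  · rw [if_pos hx, if_neg hy] at heq
    have hyc : ¬ (σ y = σ v ∨ σ y = q) := fun h => hy (mem_extend hx hxy h)
    rcases colour_of_mem hx with h1 | h1 <;> simp [h1] at heq <;> tauto
  · rw [if_neg hx, if_pos hy] at heq
    have hxc : ¬ (σ x = σ v ∨ σ x = q) := fun h => hx (mem_extend hy hxy.symm h)
    rcases colour_of_mem hy with h1 | h1 <;> simp [h1] at heq <;> tauto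
  · rw [if_neg hx, if_neg hy] at heq
    exact hσ hxy heq

lemma disagreementSet_switching (G : SimpleGraph V) (v : V) (σ : V → Fin k) (q : Fin k) :
    disagreementSet G v (switching G v σ q) (σ v) = disagreementSet G v σ q := by
  ext x
  constructor <;> rintro ⟨p, hp⟩ <;> refine ⟨p, fun w hw => ?_⟩
  · have := hp w hw
    rw [switching_v] at this
    exact (switching_colour_iff G v σ q w).1 this.symm
  · have := (switching_colour_iff G v σ q w).2 (hp w hw)
    rw [switching_v]
    exact this.symm

lemma switching_involutive (G : SimpleGraph V) (v : V) (σ : V → Fin k) (q : Fin k) :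
    switching G v (switching G v σ q) (σ v) = σ := by
  funext x
  rw [switching_eq, disagreementSet_switching, switching_v, switching_eq]
  by_cases hx : x ∈ disagreementSet G v σ q
  · rw [if_pos hx, if_pos hx, Equiv.swap_comm, Equiv.swap_apply_self]
  · rw [if_neg hx, if_neg hx]

lemma twoColouredPath_iff_mem :
    TwoColouredPath G σ v u (σ v) q ↔ u ∈ disagreementSet G v σ q := Iff.rfl

lemma twoColouredPath_comm {c : Fin k} :
    TwoColouredPath G σ v u c q ↔ TwoColouredPath G σ v u q c := by
  constructor <;> rintro ⟨p, hp⟩ <;> exact ⟨p, fun w hw => (hp w hw).symm⟩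

lemma twoColouredPath_switching (G : SimpleGraph V) (v u : V) (σ : V → Fin k) (q : Fin k) :
    TwoColouredPath G (switching G v σ q) v u (σ v) q ↔ TwoColouredPath G σ v u (σ v) q := by
  constructor <;> rintro ⟨p, hp⟩ <;> refine ⟨p, fun w hw => ?_⟩
  · exact (switching_colour_iff G v σ q w).1 (hp w hw)
  · exact (switching_colour_iff G v σ q w).2 (hp w hw)

end Switching

section Counting

variable {V : Type*} [Fintype V] [DecidableEq V] {k : ℕ}

/-- generic total-variation style reduction -/
lemma tv_bound {ι : Type*} [Fintype ι] (n m : ι → ℝ) (S : Finset ι)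
    (htot : ∑ τ, n τ = ∑ τ, m τ) :
    |∑ τ ∈ S, n τ - ∑ τ ∈ S, m τ| ≤ ∑ τ, max (n τ - m τ) 0 := by
  rw [← Finset.sum_sub_distrib, abs_le]
  have h0 : ∑ τ, (n τ - m τ) = 0 := by rw [Finset.sum_sub_distrib, htot, sub_self]
  have hmax : ∀ T : Finset ι, ∑ τ ∈ T, (n τ - m τ) ≤ ∑ τ, max (n τ - m τ) 0 := by
    intro T
    calc ∑ τ ∈ T, (n τ - m τ) ≤ ∑ τ ∈ T, max (n τ - m τ) 0 :=
          Finset.sum_le_sum (fun i _ => le_max_left _ _)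
      _ ≤ ∑ τ, max (n τ - m τ) 0 :=
          Finset.sum_le_sum_of_subset_of_nonneg (Finset.subset_univ T)
            (fun i _ _ => le_max_right _ _)
  have hsplit : ∑ τ ∈ S, (n τ - m τ) + ∑ τ ∈ Sᶜ, (n τ - m τ) = 0 := by
    rw [Finset.sum_add_sum_compl, h0]
  exact ⟨by have := hmax Sᶜ; linarith, hmax S⟩

lemma natCard_cast (p : (V → Fin k) → Prop) :
    (Nat.card {σ : V → Fin k // p σ} : ℝ) = ((Finset.univ.filter p).card : ℝ) := by
  rw [Nat.card_eq_fintype_card, Fintype.card_subtype]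

lemma card_filter_mem_real (A B : (V → Fin k) → Prop) (S : Finset (V → Fin k)) :
    ((Finset.univ.filter fun τ => A τ ∧ B τ ∧ τ ∈ S).card : ℝ)
      = ∑ τ ∈ S, (if A τ ∧ B τ then (1:ℝ) else 0) := by
  have h : ∀ τ : V → Fin k, (if A τ ∧ B τ ∧ τ ∈ S then (1:ℝ) else 0)
      = if τ ∈ S then (if A τ ∧ B τ then (1:ℝ) else 0) else 0 := by
    intro τ; split_ifs <;> tauto
  rw [Finset.card_filter]
  push_cast
  simp only [h]
  rw [← Finset.sum_filter, Finset.filter_mem_eq_inter, Finset.univ_inter]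

lemma fiber_sum (F : Fin k → (V → Fin k)) (a : Fin k) (S : Finset (V → Fin k)) :
    ∑ τ ∈ S, ((Finset.univ.filter fun q : Fin k => q ≠ a ∧ F q = τ).card)
    = (Finset.univ.filter fun q : Fin k => q ≠ a ∧ F q ∈ S).card := by
  rw [Finset.card_eq_sum_card_fiberwise
    (f := F) (t := S) (fun q hq => (Finset.mem_filter.1 hq).2.2)]
  apply Finset.sum_congr rfl
  intro τ hτ
  congr 1
  rw [Finset.filter_filter]
  apply Finset.filter_congr
  intro q _
  constructor
  · rintro ⟨h1, h3⟩; exact ⟨⟨h1, h3 ▸ hτ⟩, h3⟩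
  · rintro ⟨⟨h1, _⟩, h3⟩; exact ⟨h1, h3⟩

lemma card_ne (a : Fin k) :
    (Finset.univ.filter fun q : Fin k => q ≠ a).card = k - 1 := by
  rw [Finset.filter_ne', Finset.card_erase_of_mem (Finset.mem_univ a), Finset.card_univ,
    Fintype.card_fin]

/-- the per-input-per-output weight of the Update chain -/
noncomputable def wfun (G : SimpleGraph V) (v u : V) (σ τ : V → Fin k) : ℝ :=
  if σ v ≠ σ u then (if σ = τ then 1 else 0)
  else (1 / ((k : ℝ) - 1)) *
    ((Finset.univ.filter fun q : Fin k => q ≠ σ v ∧ switching G v σ q = τ).card : ℝ)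

variable {G : SimpleGraph V} {v u : V}

lemma wfun_nonneg (hk : 2 ≤ k) (σ τ : V → Fin k) :
    0 ≤ wfun G v u σ τ := by
  have h2 : (2:ℝ) ≤ (k:ℝ) := by exact_mod_cast hk
  have : (0:ℝ) < (k:ℝ) - 1 := by linarith
  unfold wfun
  split_ifs <;> positivity

lemma wfun_sum_S (S : Finset (V → Fin k)) (σ : V → Fin k) :
    ∑ τ ∈ S, wfun G v u σ τ
    = if σ v ≠ σ u then (if σ ∈ S then (1:ℝ) else 0)
      else (1 / ((k : ℝ) - 1)) *
        ((Finset.univ.filter fun q : Fin k => q ≠ σ v ∧ switching G v σ q ∈ S).card : ℝ) := by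
  unfold wfun
  by_cases hgood : σ v ≠ σ u
  · simp only [if_pos hgood]
    rw [Finset.sum_ite_eq]
  · simp only [if_neg hgood]
    rw [← Finset.mul_sum, ← fiber_sum (fun q => switching G v σ q) (σ v) S]
    push_cast
    ring

lemma wfun_total (hk : 2 ≤ k) (σ : V → Fin k) :
    ∑ τ : V → Fin k, wfun G v u σ τ = 1 := by
  rw [wfun_sum_S Finset.univ σ]
  by_cases h : σ v ≠ σ u
  · rw [if_pos h, if_pos (Finset.mem_univ σ)]
  · rw [if_neg h]
    have he : (Finset.univ.filter fun q : Fin k =>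
        q ≠ σ v ∧ switching G v σ q ∈ (Finset.univ : Finset (V → Fin k))) =
        Finset.univ.filter fun q : Fin k => q ≠ σ v := by
      apply Finset.filter_congr; intro q _; simp
    rw [he, card_ne]
    have h1 : (1:ℕ) ≤ k := le_trans (by norm_num) hk
    have h2 : (2:ℝ) ≤ (k:ℝ) := by exact_mod_cast hk
    rw [Nat.cast_sub h1]
    push_cast
    have h3 : (k:ℝ) - 1 ≠ 0 := by linarith
    field_simp


lemma wfun_self (τ : V → Fin k) (hgood : τ v ≠ τ u) : wfun G v u τ τ = 1 := by
  unfold wfun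
  rw [if_pos hgood, if_pos rfl]

lemma m_ge_one (hk : 2 ≤ k) (τ : V → Fin k) (hτ : IsProperColoring G τ)
    (hgood : τ v ≠ τ u) :
    1 ≤ ∑ σ ∈ Finset.univ.filter (fun σ : V → Fin k => IsProperColoring G σ),
        wfun G v u σ τ := by
  have hmem : τ ∈ Finset.univ.filter (fun σ : V → Fin k => IsProperColoring G σ) :=
    Finset.mem_filter.2 ⟨Finset.mem_univ _, hτ⟩
  have := Finset.single_le_sum (f := fun σ => wfun G v u σ τ)
    (fun i _ => wfun_nonneg hk i τ) hmem
  simpa [wfun_self τ hgood] using this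

lemma m_ge_big (hk : 2 ≤ k) (τ : V → Fin k) (hτ : IsProperColoring G τ)
    (hgood : τ v ≠ τ u) (hnp : ¬ TwoColouredPath G τ v u (τ u) (τ v)) :
    1 + 1 / ((k:ℝ) - 1) ≤
      ∑ σ ∈ Finset.univ.filter (fun σ : V → Fin k => IsProperColoring G σ),
        wfun G v u σ τ := by
  have h2 : (2:ℝ) ≤ (k:ℝ) := by exact_mod_cast hk
  have hκ : (0:ℝ) < (k:ℝ) - 1 := by linarith
  set σ0 : V → Fin k := switching G v τ (τ u) with hσ0
  have hσ0p : IsProperColoring G σ0 := switching_proper hτ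
  have hσ0v : σ0 v = τ u := switching_v G v τ (τ u)
  have humem : u ∉ disagreementSet G v τ (τ u) := by
    intro hmem
    exact hnp (twoColouredPath_comm.2 (twoColouredPath_iff_mem.2 hmem))
  have hσ0u : σ0 u = τ u := switching_of_not_mem humem
  have hne : σ0 ≠ τ := by
    intro h
    apply hgood
    have hh : τ v = σ0 v := by rw [h]
    rw [hσ0v] at hh
    exact hh
  have hbad : ¬ σ0 v ≠ σ0 u := by rw [hσ0v, hσ0u]; simp
  have hwτ : wfun G v u τ τ = 1 := wfun_self τ hgood
  have hwσ0 : 1 / ((k:ℝ) - 1) ≤ wfun G v u σ0 τ := by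
    unfold wfun
    rw [if_neg hbad]
    have hmem : τ v ∈ Finset.univ.filter
        (fun q : Fin k => q ≠ σ0 v ∧ switching G v σ0 q = τ) := by
      refine Finset.mem_filter.2 ⟨Finset.mem_univ _, ?_, ?_⟩
      · rw [hσ0v]; exact hgood
      · rw [hσ0]; exact switching_involutive G v τ (τ u)
    have hcard : 1 ≤ (Finset.univ.filter
        (fun q : Fin k => q ≠ σ0 v ∧ switching G v σ0 q = τ)).card :=
      Finset.card_pos.2 ⟨τ v, hmem⟩
    have hcard' : (1:ℝ) ≤ ((Finset.univ.filter
        (fun q : Fin k => q ≠ σ0 v ∧ switching G v σ0 q = τ)).card : ℝ) := by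
      exact_mod_cast hcard
    calc 1 / ((k:ℝ) - 1) = 1 / ((k:ℝ) - 1) * 1 := by ring
      _ ≤ _ := by
        apply mul_le_mul_of_nonneg_left hcard'
        positivity
  have hsub : {σ0, τ} ⊆ Finset.univ.filter (fun σ : V → Fin k => IsProperColoring G σ) := by
    intro x hx
    rcases Finset.mem_insert.1 hx with h | h
    · subst h; exact Finset.mem_filter.2 ⟨Finset.mem_univ _, hσ0p⟩
    · rw [Finset.mem_singleton] at h; subst h
      exact Finset.mem_filter.2 ⟨Finset.mem_univ _, hτ⟩
  calc 1 + 1 / ((k:ℝ) - 1) ≤ wfun G v u σ0 τ + wfun G v u τ τ := by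
        rw [hwτ]; linarith
    _ = ∑ σ ∈ ({σ0, τ} : Finset (V → Fin k)), wfun G v u σ τ := by
        rw [Finset.sum_pair hne]
    _ ≤ _ := Finset.sum_le_sum_of_subset_of_nonneg hsub
        (fun i _ _ => wfun_nonneg hk i τ)

lemma card_S_le (c q : Fin k) (hcq : c ≠ q) :
    (Finset.univ.filter fun σ : V → Fin k => IsProperColoring G σ ∧ σ v = c ∧ σ u = c ∧
      ¬ TwoColouredPath G σ v u c q).card
  ≤ (Finset.univ.filter fun σ : V → Fin k => IsProperColoring G σ ∧ σ v = q ∧ σ u = c ∧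
      ¬ TwoColouredPath G σ v u c q).card := by
  apply Finset.card_le_card_of_injOn (fun σ => switching G v σ q)
  · intro σ hσ
    rw [Finset.mem_coe, Finset.mem_filter] at hσ
    obtain ⟨-, hp, hv, hu, hnp⟩ := hσ
    have humem : u ∉ disagreementSet G v σ q := by
      intro hmem
      apply hnp
      have := twoColouredPath_iff_mem.2 hmem
      rwa [hv] at this
    refine Finset.mem_filter.2 ⟨Finset.mem_univ _, switching_proper hp,
      switching_v G v σ q, ?_, ?_⟩
    · show switching G v σ q u = c
      rw [switching_of_not_mem humem, hu]
    · intro hpath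
      apply hnp
      have := (twoColouredPath_switching G v u σ q).1 (by rwa [hv])
      rwa [hv] at this
  · intro σ1 h1 σ2 h2 heq
    simp only [Finset.coe_filter, Set.mem_setOf_eq] at h1 h2
    have e1 : σ1 = switching G v (switching G v σ1 q) (σ1 v) :=
      (switching_involutive G v σ1 q).symm
    have e2 : σ2 = switching G v (switching G v σ2 q) (σ2 v) :=
      (switching_involutive G v σ2 q).symm
    change switching G v σ1 q = switching G v σ2 q at heq
    rw [e1, e2, h1.2.2.1, h2.2.2.1, heq]


lemma good_fiber (G : SimpleGraph V) (v u : V) :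
    (Finset.univ.filter fun σ : V → Fin k => IsProperColoring G σ ∧ σ v ≠ σ u).card
    = ∑ p ∈ (Finset.univ ×ˢ Finset.univ).filter (fun p : Fin k × Fin k => p.1 ≠ p.2),
        (Finset.univ.filter fun σ : V → Fin k =>
          IsProperColoring G σ ∧ σ v = p.1 ∧ σ u = p.2).card := by
  rw [Finset.card_eq_sum_card_fiberwise (f := fun σ : V → Fin k => (σ v, σ u))
      (t := (Finset.univ ×ˢ Finset.univ).filter (fun p : Fin k × Fin k => p.1 ≠ p.2))]
  · apply Finset.sum_congr rfl
    intro p hp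
    obtain ⟨a, b⟩ := p
    simp only [Finset.mem_filter, Finset.mem_product, Finset.mem_univ, true_and] at hp
    rw [Finset.filter_filter]
    congr 1
    apply Finset.filter_congr
    intro σ _
    simp only [Prod.mk.injEq]
    constructor
    · rintro ⟨⟨hP, -⟩, h1, h2⟩; exact ⟨hP, h1, h2⟩
    · rintro ⟨hP, h1, h2⟩
      exact ⟨⟨hP, by rw [h1, h2]; exact hp⟩, h1, h2⟩
  · intro σ hσ
    rw [Finset.mem_coe, Finset.mem_filter] at hσ
    simp only [Finset.mem_coe, Finset.mem_filter, Finset.mem_product, Finset.mem_univ, true_and]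
    exact hσ.2.2

lemma s_fiber (G : SimpleGraph V) (v u : V) :
    ((Finset.univ.filter fun σ : V → Fin k => IsProperColoring G σ ∧ σ v ≠ σ u).filter
        fun σ => ¬ TwoColouredPath G σ v u (σ u) (σ v)).card
    = ∑ p ∈ (Finset.univ ×ˢ Finset.univ).filter (fun p : Fin k × Fin k => p.1 ≠ p.2),
        (Finset.univ.filter fun σ : V → Fin k =>
          IsProperColoring G σ ∧ σ v = p.1 ∧ σ u = p.2 ∧
            ¬ TwoColouredPath G σ v u p.2 p.1).card := by
  rw [Finset.card_eq_sum_card_fiberwise (f := fun σ : V → Fin k => (σ v, σ u))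
      (t := (Finset.univ ×ˢ Finset.univ).filter (fun p : Fin k × Fin k => p.1 ≠ p.2))]
  · apply Finset.sum_congr rfl
    intro p hp
    obtain ⟨a, b⟩ := p
    simp only [Finset.mem_filter, Finset.mem_product, Finset.mem_univ, true_and] at hp
    rw [Finset.filter_filter, Finset.filter_filter]
    congr 1
    apply Finset.filter_congr
    intro σ _
    simp only [Prod.mk.injEq]
    constructor
    · rintro ⟨⟨hP, -⟩, hnp, h1, h2⟩
      refine ⟨hP, h1, h2, ?_⟩
      rwa [h1, h2] at hnp
    · rintro ⟨hP, h1, h2, hnp⟩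
      refine ⟨⟨hP, by rw [h1, h2]; exact hp⟩, ?_, h1, h2⟩
      rwa [h1, h2]
  · intro σ hσ
    rw [Finset.mem_coe, Finset.mem_filter, Finset.mem_filter] at hσ
    simp only [Finset.mem_coe, Finset.mem_filter, Finset.mem_product, Finset.mem_univ, true_and]
    exact hσ.1.2.2

lemma bad_fiber (G : SimpleGraph V) (v u : V) :
    ((Finset.univ.filter fun σ : V → Fin k => IsProperColoring G σ).filter
        fun σ => ¬ σ v ≠ σ u).card
    = ∑ c : Fin k,
        (Finset.univ.filter fun σ : V → Fin k =>
          IsProperColoring G σ ∧ σ v = c ∧ σ u = c).card := by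
  rw [Finset.card_eq_sum_card_fiberwise (f := fun σ : V → Fin k => σ v)
      (t := Finset.univ) (fun σ _ => Finset.mem_univ _)]
  apply Finset.sum_congr rfl
  intro c _
  rw [Finset.filter_filter, Finset.filter_filter]
  congr 1
  apply Finset.filter_congr
  intro σ _
  simp only [not_not]
  constructor
  · rintro ⟨hP, heq, h1⟩
    exact ⟨hP, h1, by rw [← heq]; exact h1⟩
  · rintro ⟨hP, h1, h2⟩
    exact ⟨hP, by rw [h1, h2], h1⟩

lemma sum_PR_snd (hk : 1 ≤ k) (f : Fin k → ℝ) :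
    ∑ p ∈ (Finset.univ ×ˢ Finset.univ).filter (fun p : Fin k × Fin k => p.1 ≠ p.2), f p.2
      = ((k:ℝ) - 1) * ∑ b, f b := by
  rw [Finset.sum_filter, Finset.sum_product, Finset.sum_comm]
  have hinner : ∀ b : Fin k, (∑ a : Fin k, if a ≠ b then f b else 0)
      = ((k:ℝ) - 1) * f b := by
    intro b
    rw [← Finset.sum_filter, Finset.sum_const, card_ne, nsmul_eq_mul,
      Nat.cast_sub hk, Nat.cast_one]
  rw [Finset.sum_congr rfl (fun b _ => hinner b), ← Finset.mul_sum]

end Counting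

end UpdateAux

open UpdateAux in
/-- Accuracy of `Update`.  Let `G` be a finite graph, `k ≥ 2`, and `v ≠ u` non-adjacent
vertices; suppose there is a proper `k`-colouring and a good one (`σ v ≠ σ u`).  Let
`α ∈ [0,1]` be such that for all distinct colours `c, q`, `|S_q(c,c)| ≥ (1-α)|Ω(c,c)|`
and `|S_c(q,c)| ≥ (1-α)|Ω(q,c)|`.  Let `ν` be the uniform distribution on good
colourings and let `ν'` be the law of the output of `Update` on a uniformly random
proper `k`-colouring (output `X` if `X` is good; otherwise the `q`-switching of `X` at
`v` for a uniform `q ≠ X v`).  Then `‖ν - ν'‖_TV ≤ α`, i.e. for every set `S` of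
colourings, `|ν S - ν' S| ≤ α`. -/
theorem update_accuracy {V : Type*} [Fintype V] [DecidableEq V] (G : SimpleGraph V)
    {k : ℕ} (hk : 2 ≤ k) (v u : V) (hvu : v ≠ u) (hadj : ¬ G.Adj v u)
    (hΩ : ∃ σ : V → Fin k, IsProperColoring G σ)
    (hGood : ∃ σ : V → Fin k, IsProperColoring G σ ∧ σ v ≠ σ u)
    (α : ℝ) (hα0 : 0 ≤ α) (hα1 : α ≤ 1)
    (hS : ∀ c q : Fin k, c ≠ q →
      (1 - α) * (Nat.card {σ : V → Fin k //
            IsProperColoring G σ ∧ σ v = c ∧ σ u = c} : ℝ) ≤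
          (Nat.card {σ : V → Fin k // IsProperColoring G σ ∧ σ v = c ∧ σ u = c ∧
            ¬ TwoColouredPath G σ v u c q} : ℝ) ∧
      (1 - α) * (Nat.card {σ : V → Fin k //
            IsProperColoring G σ ∧ σ v = q ∧ σ u = c} : ℝ) ≤
          (Nat.card {σ : V → Fin k // IsProperColoring G σ ∧ σ v = q ∧ σ u = c ∧
            ¬ TwoColouredPath G σ v u c q} : ℝ)) :
    ∀ S : Finset (V → Fin k),
      |((Finset.univ.filter fun σ : V → Fin k =>
            IsProperColoring G σ ∧ σ v ≠ σ u ∧ σ ∈ S).card : ℝ) /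
          ((Finset.univ.filter fun σ : V → Fin k =>
            IsProperColoring G σ ∧ σ v ≠ σ u).card : ℝ) -
        (∑ σ ∈ Finset.univ.filter fun σ : V → Fin k => IsProperColoring G σ,
            (if σ v ≠ σ u then (if σ ∈ S then (1 : ℝ) else 0)
             else (1 / ((k : ℝ) - 1)) *
               ((Finset.univ.filter fun q : Fin k =>
                  q ≠ σ v ∧ switching G v σ q ∈ S).card : ℝ))) /
          ((Finset.univ.filter fun σ : V → Fin k =>
            IsProperColoring G σ).card : ℝ)| ≤ α := by
  intro S
  classical
  have hκ2 : (2:ℝ) ≤ (k:ℝ) := by exact_mod_cast hk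
  have hκ : (0:ℝ) < (k:ℝ) - 1 := by linarith
  have hΩne : (Finset.univ.filter fun σ : V → Fin k => IsProperColoring G σ).Nonempty := by
    obtain ⟨σ0, h0⟩ := hΩ
    exact ⟨σ0, Finset.mem_filter.2 ⟨Finset.mem_univ _, h0⟩⟩
  have hGdne : (Finset.univ.filter fun σ : V → Fin k =>
      IsProperColoring G σ ∧ σ v ≠ σ u).Nonempty := by
    obtain ⟨σ0, h0⟩ := hGood
    exact ⟨σ0, Finset.mem_filter.2 ⟨Finset.mem_univ _, h0⟩⟩
  set Nn : ℝ := ((Finset.univ.filter fun σ : V → Fin k => IsProperColoring G σ).card : ℝ)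
    with hNndef
  set gg : ℝ := ((Finset.univ.filter fun σ : V → Fin k =>
      IsProperColoring G σ ∧ σ v ≠ σ u).card : ℝ) with hggdef
  have hNpos : 0 < Nn := by rw [hNndef]; exact_mod_cast Finset.card_pos.2 hΩne
  have hgpos : 0 < gg := by rw [hggdef]; exact_mod_cast Finset.card_pos.2 hGdne
  have hsub : (Finset.univ.filter fun σ : V → Fin k => IsProperColoring G σ ∧ σ v ≠ σ u)
      ⊆ (Finset.univ.filter fun σ : V → Fin k => IsProperColoring G σ) := by
    intro σ hσ
    rw [Finset.mem_filter] at hσ ⊢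
    exact ⟨hσ.1, hσ.2.1⟩
  have hgN : gg ≤ Nn := by
    rw [hNndef, hggdef]
    exact_mod_cast Finset.card_le_card hsub
  set n : (V → Fin k) → ℝ := fun τ =>
    (if IsProperColoring G τ ∧ τ v ≠ τ u then (1:ℝ) else 0) / gg with hndef
  set m : (V → Fin k) → ℝ := fun τ =>
    (∑ σ ∈ Finset.univ.filter fun σ : V → Fin k => IsProperColoring G σ,
      wfun G v u σ τ) / Nn with hmdef
  have hA : ((Finset.univ.filter fun σ : V → Fin k =>
        IsProperColoring G σ ∧ σ v ≠ σ u ∧ σ ∈ S).card : ℝ) / gg = ∑ τ ∈ S, n τ := by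
    simp only [hndef]
    rw [← Finset.sum_div]
    congr 1
    convert card_filter_mem_real (fun τ : V → Fin k => IsProperColoring G τ)
      (fun τ => τ v ≠ τ u) S using 2 <;> congr!
  have hB : (∑ σ ∈ Finset.univ.filter fun σ : V → Fin k => IsProperColoring G σ,
        (if σ v ≠ σ u then (if σ ∈ S then (1 : ℝ) else 0)
         else (1 / ((k : ℝ) - 1)) *
           ((Finset.univ.filter fun q : Fin k =>
              q ≠ σ v ∧ switching G v σ q ∈ S).card : ℝ))) / Nn = ∑ τ ∈ S, m τ := by
    simp only [hmdef]
    rw [← Finset.sum_div]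
    congr 1
    rw [Finset.sum_comm]
    apply Finset.sum_congr rfl
    intro σ0 _
    exact (wfun_sum_S S σ0).symm
  rw [hA, hB]
  have hsum_n : ∑ τ : V → Fin k, n τ = 1 := by
    simp only [hndef]
    rw [← Finset.sum_div]
    have h1 : ∑ τ : V → Fin k,
        (if IsProperColoring G τ ∧ τ v ≠ τ u then (1:ℝ) else 0) = gg := by
      rw [hggdef, Finset.card_filter]
      push_cast
      rfl
    rw [h1, div_self (ne_of_gt hgpos)]
  have hsum_m : ∑ τ : V → Fin k, m τ = 1 := by
    simp only [hmdef]
    rw [← Finset.sum_div, Finset.sum_comm,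
      Finset.sum_congr rfl (fun σ0 _ => wfun_total hk σ0),
      Finset.sum_const, nsmul_eq_mul, mul_one, ← hNndef, div_self (ne_of_gt hNpos)]
  refine le_trans (tv_bound n m S (by rw [hsum_n, hsum_m])) ?_
  set A : ℝ := max (1/gg - (1 + 1/((k:ℝ)-1))/Nn) 0 with hAdef
  set B : ℝ := 1/gg - 1/Nn with hBdef
  have hB0 : 0 ≤ B := by
    rw [hBdef]
    have := one_div_le_one_div_of_le hgpos hgN
    linarith
  have hpoint : ∀ τ : V → Fin k, max (n τ - m τ) 0 ≤
      (if IsProperColoring G τ ∧ τ v ≠ τ u then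
        (if TwoColouredPath G τ v u (τ u) (τ v) then B else A) else 0) := by
    intro τ
    by_cases hgood : IsProperColoring G τ ∧ τ v ≠ τ u
    · rw [if_pos hgood]
      have hn : n τ = 1/gg := by simp only [hndef]; rw [if_pos hgood]
      by_cases hpath : TwoColouredPath G τ v u (τ u) (τ v)
      · rw [if_pos hpath]
        have hm1 : 1/Nn ≤ m τ := by
          simp only [hmdef]
          exact (div_le_div_iff_of_pos_right hNpos).2 (m_ge_one hk τ hgood.1 hgood.2)
        refine max_le (by rw [hBdef]; linarith) hB0
      · rw [if_neg hpath]
        have hm2 : (1 + 1/((k:ℝ)-1))/Nn ≤ m τ := by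
          simp only [hmdef]
          exact (div_le_div_iff_of_pos_right hNpos).2 (m_ge_big hk τ hgood.1 hgood.2 hpath)
        rw [hAdef]
        exact max_le_max (by rw [hn]; linarith) le_rfl
    · rw [if_neg hgood]
      have hn : n τ = 0 := by simp only [hndef]; rw [if_neg hgood, zero_div]
      have hm0 : 0 ≤ m τ := by
        simp only [hmdef]
        exact div_nonneg
          (Finset.sum_nonneg fun σ _ => wfun_nonneg hk σ τ) hNpos.le
      exact max_le (by rw [hn]; linarith) le_rfl
  refine le_trans (Finset.sum_le_sum (fun τ _ => hpoint τ)) ?_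
  rw [← Finset.sum_filter, Finset.sum_ite, Finset.sum_const, Finset.sum_const,
    nsmul_eq_mul, nsmul_eq_mul]
  set s1 : ℝ := (((Finset.univ.filter fun a : V → Fin k =>
      IsProperColoring G a ∧ a v ≠ a u).filter
        fun x => TwoColouredPath G x v u (x u) (x v)).card : ℝ) with hs1def
  set s2 : ℝ := (((Finset.univ.filter fun a : V → Fin k =>
      IsProperColoring G a ∧ a v ≠ a u).filter
        fun x => ¬ TwoColouredPath G x v u (x u) (x v)).card : ℝ) with hs2def
  have hs1nonneg : 0 ≤ s1 := by rw [hs1def]; positivity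
  have hs12 : s1 + s2 = gg := by
    rw [hs1def, hs2def, hggdef, ← Nat.cast_add]
    congr 1
    exact Finset.card_filter_add_card_filter_not _
  have h01 : gg ≠ 0 := ne_of_gt hgpos
  have h02 : Nn ≠ 0 := ne_of_gt hNpos
  have h03 : ((k:ℝ) - 1) ≠ 0 := ne_of_gt hκ
  have hgg_sum : gg = ∑ p ∈ (Finset.univ ×ˢ Finset.univ).filter
      (fun p : Fin k × Fin k => p.1 ≠ p.2),
      ((Finset.univ.filter fun σ : V → Fin k =>
        IsProperColoring G σ ∧ σ v = p.1 ∧ σ u = p.2).card : ℝ) := by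
    rw [hggdef]
    exact_mod_cast good_fiber G v u
  have hs2_sum : s2 = ∑ p ∈ (Finset.univ ×ˢ Finset.univ).filter
      (fun p : Fin k × Fin k => p.1 ≠ p.2),
      ((Finset.univ.filter fun σ : V → Fin k =>
        IsProperColoring G σ ∧ σ v = p.1 ∧ σ u = p.2 ∧
          ¬ TwoColouredPath G σ v u p.2 p.1).card : ℝ) := by
    rw [hs2def]
    exact_mod_cast s_fiber G v u
  have hI : (1 - α) * gg ≤ s2 := by
    rw [hgg_sum, hs2_sum, Finset.mul_sum]
    apply Finset.sum_le_sum
    intro p hp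
    have hne : p.2 ≠ p.1 := by
      simp only [Finset.mem_filter, Finset.mem_product] at hp
      exact hp.2.symm
    have h1 := (hS p.2 p.1 hne).2
    rw [natCard_cast, natCard_cast] at h1
    convert h1 using 2 <;> congr!
  set bb : ℝ := (((Finset.univ.filter fun σ : V → Fin k =>
      IsProperColoring G σ).filter fun σ => ¬ σ v ≠ σ u).card : ℝ) with hbbdef
  have hbb0 : 0 ≤ bb := by rw [hbbdef]; positivity
  have hNgb : gg + bb = Nn := by
    rw [hggdef, hbbdef, hNndef, ← Nat.cast_add]
    congr 1
    rw [← Finset.filter_filter]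
    exact Finset.card_filter_add_card_filter_not _
  have hbad_sum : bb = ∑ c : Fin k, ((Finset.univ.filter fun σ : V → Fin k =>
      IsProperColoring G σ ∧ σ v = c ∧ σ u = c).card : ℝ) := by
    rw [hbbdef]
    exact_mod_cast bad_fiber G v u
  have hII : (1 - α) * ((k:ℝ) - 1) * bb ≤ s2 := by
    have hterm : ∀ p ∈ (Finset.univ ×ˢ Finset.univ).filter
        (fun p : Fin k × Fin k => p.1 ≠ p.2),
        (1 - α) * ((Finset.univ.filter fun σ : V → Fin k =>
          IsProperColoring G σ ∧ σ v = p.2 ∧ σ u = p.2).card : ℝ)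
        ≤ ((Finset.univ.filter fun σ : V → Fin k =>
          IsProperColoring G σ ∧ σ v = p.1 ∧ σ u = p.2 ∧
            ¬ TwoColouredPath G σ v u p.2 p.1).card : ℝ) := by
      intro p hp
      have hne : p.2 ≠ p.1 := by
        simp only [Finset.mem_filter, Finset.mem_product] at hp
        exact hp.2.symm
      have h1 := (hS p.2 p.1 hne).1
      rw [natCard_cast, natCard_cast] at h1
      have h2 : ((Finset.univ.filter fun σ : V → Fin k =>
          IsProperColoring G σ ∧ σ v = p.2 ∧ σ u = p.2 ∧
            ¬ TwoColouredPath G σ v u p.2 p.1).card : ℝ)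
          ≤ ((Finset.univ.filter fun σ : V → Fin k =>
          IsProperColoring G σ ∧ σ v = p.1 ∧ σ u = p.2 ∧
            ¬ TwoColouredPath G σ v u p.2 p.1).card : ℝ) := by
        exact_mod_cast card_S_le p.2 p.1 hne
      refine le_trans ?_ h2
      convert h1 using 2 <;> congr!
    calc (1 - α) * ((k:ℝ) - 1) * bb
        = ((k:ℝ) - 1) * ∑ c : Fin k, (1 - α) *
            ((Finset.univ.filter fun σ : V → Fin k =>
              IsProperColoring G σ ∧ σ v = c ∧ σ u = c).card : ℝ) := by
          rw [← Finset.mul_sum, hbad_sum]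
          ring
      _ = ∑ p ∈ (Finset.univ ×ˢ Finset.univ).filter
            (fun p : Fin k × Fin k => p.1 ≠ p.2),
            (1 - α) * ((Finset.univ.filter fun σ : V → Fin k =>
              IsProperColoring G σ ∧ σ v = p.2 ∧ σ u = p.2).card : ℝ) :=
          (sum_PR_snd (le_trans one_le_two hk)
            (fun c => (1 - α) * ((Finset.univ.filter fun σ : V → Fin k =>
              IsProperColoring G σ ∧ σ v = c ∧ σ u = c).card : ℝ))).symm
      _ ≤ _ := by rw [hs2_sum]; exact Finset.sum_le_sum hterm
  have hs2g : s2 ≤ gg := by linarith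
  clear_value Nn gg n m A B s1 s2 bb
  clear hpoint hS hgg_sum hs2_sum hbad_sum hsub hΩne hGdne hndef hmdef
  clear hs1def hs2def hbbdef hNndef hggdef hsum_n hsum_m hA hB n m
  rcases le_or_gt (1/gg - (1 + 1/((k:ℝ)-1))/Nn) 0 with hcase | hcase
  · have hA0 : A = 0 := by rw [hAdef]; exact max_eq_right hcase
    rw [hA0, mul_zero, add_zero]
    have h1 : s1 ≤ α * gg := by linarith [hI, hs12]
    have hBle : B ≤ 1/gg := by
      rw [hBdef]
      have h4 : 0 < 1/Nn := by positivity
      linarith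
    calc s1 * B ≤ s1 * (1/gg) := mul_le_mul_of_nonneg_left hBle hs1nonneg
      _ ≤ (α * gg) * (1/gg) := mul_le_mul_of_nonneg_right h1 (by positivity)
      _ = α := by
          rw [mul_one_div, mul_div_assoc, div_self h01, mul_one]
  · have hA1 : A = 1/gg - (1 + 1/((k:ℝ)-1))/Nn := by rw [hAdef]; exact max_eq_left hcase.le
    have hid : s1 * B + s2 * A = 1 - (gg + (1/((k:ℝ)-1)) * s2)/Nn := by
      have hs1 : s1 = gg - s2 := by linarith
      rw [hs1, hBdef, hA1]
      field_simp
      ring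
    have h6 : (1 - α) * bb ≤ (1/((k:ℝ)-1)) * s2 := by
      have h7 := mul_le_mul_of_nonneg_left hII
        (le_of_lt (by positivity : (0:ℝ) < 1/((k:ℝ)-1)))
      calc (1 - α) * bb = (1/((k:ℝ)-1)) * ((1 - α) * ((k:ℝ)-1) * bb) := by
            field_simp
        _ ≤ _ := h7
    have hmulN : α * Nn = α * gg + α * bb := by rw [← hNgb]; ring
    have hkey : (1 - α) * Nn ≤ gg + (1/((k:ℝ)-1)) * s2 := by
      have hag : 0 ≤ α * gg := mul_nonneg hα0 hgpos.le
      nlinarith [h6, hNgb, hmulN]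
    rw [hid]
    have h8 : (1 - α) ≤ (gg + (1/((k:ℝ)-1)) * s2)/Nn := by
      rw [le_div_iff₀ hNpos]
      linarith
    linarith
end

section
/- Let Δ ≥ 1, h ≥ 1 and k ≥ Δ + 2 be integers. Let T' be the complete Δ-ary rooted tree of height h with root r, and let T be a rooted subtree of T' containing r (i.e. the vertex set of T contains r and is closed under taking parents, and T carries the induced tree structure). Let L_0 be the set of vertices of T at depth h. Let σ be a proper k-colouring of T and let c ∈ {1,…,k}. Write N(c) = |{τ : τ is a proper k-colouring of T with τ = σ on L_0 and τ(r) = c}|, N = |{τ : τ is a proper k-colouring of T with τ = σ on L_0}|, N'(c) = |{τ' : τ' is a proper k-colouring of T' with τ' = σ on L_0 and τ'(r) = c}|, and N' = |{τ' : τ' is a proper k-colouring of T' with τ' = σ on L_0}|. Then N(c)·N' = N·N'(c); equivalently, the conditional probability that a uniformly random proper k-colouring of T agreeing with σ on L_0 assigns colour c to r equals the corresponding conditional probability for T'. -/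
def TVert (Δ h : ℕ) : Type := {l : List (Fin Δ) // l.length ≤ h}

def completeTree (Δ h : ℕ) : SimpleGraph (TVert Δ h) :=
  SimpleGraph.fromRel fun x y => ∃ i : Fin Δ, y.1 = i :: x.1

def treeRoot (Δ h : ℕ) : TVert Δ h := ⟨[], by simp⟩

def ParentClosed {Δ h : ℕ} (s : Set (TVert Δ h)) : Prop :=
  ∀ x y : TVert Δ h, (∃ i : Fin Δ, x.1 = i :: y.1) → x ∈ s → y ∈ s

section Aux

variable {Δ h k : ℕ} [NeZero k] (s : Set (TVert Δ h)) (hroot : treeRoot Δ h ∈ s)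

lemma tailLe {Δ h : ℕ} {l : List (Fin Δ)} (hl : l.length ≤ h) : l.tail.length ≤ h := by
  rw [List.length_tail]; exact le_trans (Nat.sub_le _ _) hl

/-- Adjacency between a vertex and its child. -/
lemma adj_child (a : Fin Δ) (l : List (Fin Δ)) (hl : (a :: l).length ≤ h)
    (hl' : l.length ≤ h) :
    (completeTree Δ h).Adj ⟨l, hl'⟩ ⟨a :: l, hl⟩ := by
  simp only [completeTree, SimpleGraph.fromRel_adj]
  refine ⟨?_, Or.inl ⟨a, rfl⟩⟩
  intro hEq
  have : l = a :: l := congrArg Subtype.val hEq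
  simp at this

open Classical in
noncomputable def decodeAux (τ : s → Fin k)
    (f : {x : TVert Δ h // x ∉ s} → {v : Fin k // v ≠ 0}) :
    (l : List (Fin Δ)) → l.length ≤ h → Fin k
  | [], hl => τ ⟨⟨[], hl⟩, hroot⟩
  | a :: l, hl =>
    if hs : (⟨a :: l, hl⟩ : TVert Δ h) ∈ s then τ ⟨⟨a :: l, hl⟩, hs⟩
    else Equiv.swap (decodeAux τ f l (Nat.le_of_succ_le hl)) 0
      (f ⟨⟨a :: l, hl⟩, hs⟩).1

noncomputable def decode (τ : s → Fin k)
    (f : {x : TVert Δ h // x ∉ s} → {v : Fin k // v ≠ 0}) : TVert Δ h → Fin k :=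
  fun x => decodeAux s hroot τ f x.1 x.2

lemma decode_mem (τ : s → Fin k) (f : {x : TVert Δ h // x ∉ s} → {v : Fin k // v ≠ 0})
    (x : TVert Δ h) (hx : x ∈ s) : decode s hroot τ f x = τ ⟨x, hx⟩ := by
  obtain ⟨l, hl⟩ := x
  cases l with
  | nil => rfl
  | cons a l => exact dif_pos hx

lemma decode_not_mem (τ : s → Fin k)
    (f : {x : TVert Δ h // x ∉ s} → {v : Fin k // v ≠ 0})
    (a : Fin Δ) (l : List (Fin Δ)) (hl : (a :: l).length ≤ h)
    (hx : (⟨a :: l, hl⟩ : TVert Δ h) ∉ s) :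
    decode s hroot τ f ⟨a :: l, hl⟩ =
      Equiv.swap (decode s hroot τ f ⟨l, Nat.le_of_succ_le hl⟩) 0
        (f ⟨⟨a :: l, hl⟩, hx⟩).1 := by
  exact dif_neg hx

lemma decode_child_ne (hclosed : ParentClosed s) (τ : s → Fin k)
    (hτ : ∀ x y : s, (completeTree Δ h).Adj x.1 y.1 → τ x ≠ τ y)
    (f : {x : TVert Δ h // x ∉ s} → {v : Fin k // v ≠ 0})
    (a : Fin Δ) (l : List (Fin Δ)) (hl : (a :: l).length ≤ h) (hl' : l.length ≤ h) :
    decode s hroot τ f ⟨a :: l, hl⟩ ≠ decode s hroot τ f ⟨l, hl'⟩ := by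
  by_cases hs : (⟨a :: l, hl⟩ : TVert Δ h) ∈ s
  · have hps : (⟨l, hl'⟩ : TVert Δ h) ∈ s := hclosed ⟨a :: l, hl⟩ ⟨l, hl'⟩ ⟨a, rfl⟩ hs
    rw [decode_mem s hroot τ f _ hs, decode_mem s hroot τ f _ hps]
    exact fun hEq => hτ _ _ ((adj_child a l hl hl').symm) hEq
  · rw [decode_not_mem s hroot τ f a l hl hs]
    have h0 : decode s hroot τ f ⟨l, Nat.le_of_succ_le hl⟩ = decode s hroot τ f ⟨l, hl'⟩ := rfl
    rw [h0]
    intro hEq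
    have : (f ⟨⟨a :: l, hl⟩, hs⟩).1 = 0 :=
      (Equiv.swap (decode s hroot τ f ⟨l, hl'⟩) 0).injective
        (hEq.trans (Equiv.swap_apply_right _ 0).symm)
    exact (f ⟨⟨a :: l, hl⟩, hs⟩).2 this

lemma decode_proper (hclosed : ParentClosed s) (τ : s → Fin k)
    (hτ : ∀ x y : s, (completeTree Δ h).Adj x.1 y.1 → τ x ≠ τ y)
    (f : {x : TVert Δ h // x ∉ s} → {v : Fin k // v ≠ 0}) :
    ∀ x y : TVert Δ h, (completeTree Δ h).Adj x y →
      decode s hroot τ f x ≠ decode s hroot τ f y := by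
  intro x y hadj
  rw [completeTree, SimpleGraph.fromRel_adj] at hadj
  obtain ⟨-, ⟨i, hi⟩ | ⟨i, hi⟩⟩ := hadj
  · have hy : y = ⟨i :: x.1, by rw [← hi]; exact y.2⟩ := Subtype.ext hi
    rw [hy]
    exact (decode_child_ne s hroot hclosed τ hτ f i x.1 _ x.2).symm
  · have hx : x = ⟨i :: y.1, by rw [← hi]; exact x.2⟩ := Subtype.ext hi
    rw [hx]
    exact decode_child_ne s hroot hclosed τ hτ f i y.1 _ y.2

include hroot in
/-- A vertex not in a parent-closed set containing the root has a nonempty list. -/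
lemma not_mem_ne_nil (x : TVert Δ h) (hx : x ∉ s) : x.1 ≠ [] := by
  intro hnil
  exact hx (by have : x = treeRoot Δ h := Subtype.ext hnil; rw [this]; exact hroot)

variable (hclosed : ParentClosed s) (σ : s → Fin k) (R : Fin k → Prop)

/-- The key bijection. -/
noncomputable def mainEquiv :
    {τ' : TVert Δ h → Fin k //
        (∀ x y : TVert Δ h, (completeTree Δ h).Adj x y → τ' x ≠ τ' y) ∧
        (∀ (x : TVert Δ h) (hx : x ∈ s), x.1.length = h → τ' x = σ ⟨x, hx⟩) ∧
        R (τ' (treeRoot Δ h))} ≃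
    {τ : s → Fin k //
        (∀ x y : s, (completeTree Δ h).Adj x.1 y.1 → τ x ≠ τ y) ∧
        (∀ x : s, (x : TVert Δ h).1.length = h → τ x = σ x) ∧
        R (τ ⟨treeRoot Δ h, hroot⟩)} ×
      ({x : TVert Δ h // x ∉ s} → {v : Fin k // v ≠ 0}) where
  toFun := fun ⟨τ', hp, hb, hr⟩ =>
    (⟨fun x => τ' x.1,
      ⟨fun x y hadj => hp x.1 y.1 hadj,
       fun x hx => hb x.1 x.2 hx, hr⟩⟩,
     fun x =>
      ⟨Equiv.swap (τ' ⟨x.1.1.tail, tailLe x.1.2⟩) 0 (τ' x.1), by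
        intro h0
        obtain ⟨⟨l, hl⟩, hx⟩ := x
        cases l with
        | nil => exact not_mem_ne_nil s hroot _ hx rfl
        | cons a l =>
          have hv : τ' ⟨a :: l, hl⟩ = τ' ⟨(a :: l).tail, tailLe hl⟩ :=
            (Equiv.swap (τ' ⟨(a :: l).tail, tailLe hl⟩) 0).injective
              (h0.trans (Equiv.swap_apply_left _ 0).symm)
          exact hp _ _ (adj_child a l hl (tailLe hl)) hv.symm⟩)
  invFun := fun ⟨⟨τ, hp, hb, hr⟩, f⟩ =>
    ⟨decode s hroot τ f,
      decode_proper s hroot hclosed τ hp f,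
      fun x hx hlen => by
        rw [decode_mem s hroot τ f x hx]; exact hb ⟨x, hx⟩ hlen,
      by rw [decode_mem s hroot τ f _ hroot]; exact hr⟩
  left_inv := by
    rintro ⟨τ', hp, hb, hr⟩
    apply Subtype.ext
    show decode s hroot _ _ = τ'
    funext x
    obtain ⟨l, hl⟩ := x
    induction l with
    | nil => rfl
    | cons a l ih =>
      by_cases hs : (⟨a :: l, hl⟩ : TVert Δ h) ∈ s
      · exact decode_mem s hroot _ _ _ hs
      · rw [decode_not_mem s hroot _ _ a l hl hs]
        show Equiv.swap (decode s hroot _ _ ⟨l, _⟩) 0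
          (Equiv.swap (τ' ⟨(a :: l).tail, _⟩) 0 (τ' ⟨a :: l, hl⟩)) = _
        rw [ih (Nat.le_of_succ_le hl)]
        have hTail : (⟨(a :: l).tail, tailLe hl⟩ : TVert Δ h)
            = ⟨l, Nat.le_of_succ_le hl⟩ := Subtype.ext rfl
        rw [hTail]
        exact Equiv.swap_apply_self _ _ _
  right_inv := by
    rintro ⟨⟨τ, hp, hb, hr⟩, f⟩
    apply Prod.ext
    · apply Subtype.ext
      funext x
      exact decode_mem s hroot τ f x.1 x.2
    · funext x
      apply Subtype.ext
      obtain ⟨⟨l, hl⟩, hx⟩ := x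
      cases l with
      | nil => exact absurd rfl (not_mem_ne_nil s hroot _ hx)
      | cons a l =>
        show Equiv.swap (decode s hroot τ f ⟨(a :: l).tail, _⟩) 0
            (decode s hroot τ f ⟨a :: l, hl⟩) = _
        rw [decode_not_mem s hroot τ f a l hl hx]
        have hTail : (⟨(a :: l).tail, tailLe hl⟩ : TVert Δ h)
            = ⟨l, Nat.le_of_succ_le hl⟩ := Subtype.ext rfl
        rw [hTail]
        exact Equiv.swap_apply_self _ _ _

include hclosed in
lemma main_card :
    Nat.card {τ' : TVert Δ h → Fin k //
        (∀ x y : TVert Δ h, (completeTree Δ h).Adj x y → τ' x ≠ τ' y) ∧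
        (∀ (x : TVert Δ h) (hx : x ∈ s), x.1.length = h → τ' x = σ ⟨x, hx⟩) ∧
        R (τ' (treeRoot Δ h))} =
    Nat.card {τ : s → Fin k //
        (∀ x y : s, (completeTree Δ h).Adj x.1 y.1 → τ x ≠ τ y) ∧
        (∀ x : s, (x : TVert Δ h).1.length = h → τ x = σ x) ∧
        R (τ ⟨treeRoot Δ h, hroot⟩)} *
      Nat.card ({x : TVert Δ h // x ∉ s} → {v : Fin k // v ≠ 0}) := by
  rw [Nat.card_congr (mainEquiv s hroot hclosed σ R), Nat.card_prod]

end Aux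

/-- Let `Δ, h ≥ 1` and `k ≥ Δ + 2`.  Let `T'` be the complete `Δ`-ary rooted tree of
height `h` and let `T` be a rooted subtree (a parent-closed vertex set `s` containing
the root, with the induced graph structure).  Let `L₀` be the depth-`h` vertices of
`T`, `σ` a proper `k`-colouring of `T` and `c` a colour.  With `N(c), N` the numbers of
proper `k`-colourings of `T` agreeing with `σ` on `L₀` (with root colour `c`,
respectively unrestricted), and `N'(c), N'` the analogous counts for `T'` (boundary
condition `σ` on `L₀`), we have `N(c) * N' = N * N'(c)`: the conditional probability
that a uniformly random proper `k`-colouring of `T` agreeing with `σ` on `L₀` gives the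
root colour `c` is the same for `T` and `T'`. -/
theorem subtree_root_marginal_eq (Δ h k : ℕ) (hΔ : 1 ≤ Δ) (hh : 1 ≤ h)
    (hk : Δ + 2 ≤ k) (s : Set (TVert Δ h)) (hroot : treeRoot Δ h ∈ s)
    (hclosed : ParentClosed s) (σ : s → Fin k)
    (hσ : ∀ x y : s, (completeTree Δ h).Adj x.1 y.1 → σ x ≠ σ y) (c : Fin k) :
    Nat.card {τ : s → Fin k //
        (∀ x y : s, (completeTree Δ h).Adj x.1 y.1 → τ x ≠ τ y) ∧
        (∀ x : s, (x : TVert Δ h).1.length = h → τ x = σ x) ∧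
        τ ⟨treeRoot Δ h, hroot⟩ = c} *
      Nat.card {τ' : TVert Δ h → Fin k //
        (∀ x y : TVert Δ h, (completeTree Δ h).Adj x y → τ' x ≠ τ' y) ∧
        (∀ (x : TVert Δ h) (hx : x ∈ s), x.1.length = h → τ' x = σ ⟨x, hx⟩)} =
    Nat.card {τ : s → Fin k //
        (∀ x y : s, (completeTree Δ h).Adj x.1 y.1 → τ x ≠ τ y) ∧
        (∀ x : s, (x : TVert Δ h).1.length = h → τ x = σ x)} *
      Nat.card {τ' : TVert Δ h → Fin k //
        (∀ x y : TVert Δ h, (completeTree Δ h).Adj x y → τ' x ≠ τ' y) ∧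
        (∀ (x : TVert Δ h) (hx : x ∈ s), x.1.length = h → τ' x = σ ⟨x, hx⟩) ∧
        τ' (treeRoot Δ h) = c} := by
  haveI : NeZero k := ⟨by omega⟩
  have h1 : Nat.card {τ' : TVert Δ h → Fin k //
        (∀ x y : TVert Δ h, (completeTree Δ h).Adj x y → τ' x ≠ τ' y) ∧
        (∀ (x : TVert Δ h) (hx : x ∈ s), x.1.length = h → τ' x = σ ⟨x, hx⟩)} =
      Nat.card {τ' : TVert Δ h → Fin k //
        (∀ x y : TVert Δ h, (completeTree Δ h).Adj x y → τ' x ≠ τ' y) ∧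
        (∀ (x : TVert Δ h) (hx : x ∈ s), x.1.length = h → τ' x = σ ⟨x, hx⟩) ∧
        (fun _ : Fin k => True) (τ' (treeRoot Δ h))} :=
    Nat.card_congr (Equiv.subtypeEquivRight (by tauto))
  have h2 : Nat.card {τ : s → Fin k //
        (∀ x y : s, (completeTree Δ h).Adj x.1 y.1 → τ x ≠ τ y) ∧
        (∀ x : s, (x : TVert Δ h).1.length = h → τ x = σ x)} =
      Nat.card {τ : s → Fin k //
        (∀ x y : s, (completeTree Δ h).Adj x.1 y.1 → τ x ≠ τ y) ∧
        (∀ x : s, (x : TVert Δ h).1.length = h → τ x = σ x) ∧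
        (fun _ : Fin k => True) (τ ⟨treeRoot Δ h, hroot⟩)} :=
    Nat.card_congr (Equiv.subtypeEquivRight (by tauto))
  rw [h1, h2, main_card s hroot hclosed σ (fun _ => True),
    main_card s hroot hclosed σ (fun v => v = c)]
  ring
end

section
/- Let Δ ≥ 1, h ≥ 1 and k ≥ Δ + 2 be integers, and let δ ≥ 0 be a real number. Suppose that the complete Δ-ary rooted tree T' of height h with root r' and leaf set L satisfies: for every proper k-colouring σ' of T' and every colour c ∈ {1,…,k}, if Y is a uniformly random proper k-colouring of T' conditioned on agreeing with σ' on L, then |Pr[Y(r') = c] − 1/k| ≤ δ/k. Then every rooted tree T of height h whose maximum degree (as a graph) is at most Δ satisfies: for every proper k-colouring σ of T and every colour c ∈ {1,…,k}, if X is a uniformly random proper k-colouring of T conditioned on agreeing with σ on L_0, where L_0 is the set of vertices of T at depth h, then |Pr[X(r) = c] − 1/k| ≤ δ/k, where r is the root of T. -/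
open SimpleGraph

namespace TreeMono

attribute [local instance] Classical.propDecidable Classical.decEq

variable {W : Type} {G : SimpleGraph W} {r : W}

noncomputable def pth (hT : G.IsTree) (r x : W) : G.Walk r x :=
  (hT.existsUnique_path r x).choose

lemma pth_isPath (hT : G.IsTree) (r x : W) : (pth hT r x).IsPath :=
  (hT.existsUnique_path r x).choose_spec.1

lemma pth_unique (hT : G.IsTree) {r x : W} (q : G.Walk r x) (hq : q.IsPath) :
    q = pth hT r x :=
  ((hT.existsUnique_path r x).choose_spec.2 q hq)

lemma dist_eq_pth_length (hT : G.IsTree) (r x : W) :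
    G.dist r x = (pth hT r x).length := by
  refine le_antisymm (dist_le _) ?_
  obtain ⟨p, hp⟩ := hT.isConnected.exists_walk_length_eq_dist r x
  have h1 : p.bypass = pth hT r x := pth_unique hT _ p.bypass_isPath
  calc (pth hT r x).length = p.bypass.length := by rw [h1]
    _ ≤ p.length := p.length_bypass_le
    _ = G.dist r x := hp

/-- edge dichotomy -/
lemma pth_dichotomy (hT : G.IsTree) (r : W) {x y : W} (hadj : G.Adj x y) :
    (pth hT r y) = (pth hT r x).concat hadj ∨
      (pth hT r x) = (pth hT r y).concat hadj.symm := by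
  classical
  by_cases hy : y ∈ (pth hT r x).support
  · right
    have htake : ((pth hT r x).takeUntil y hy).IsPath := (pth_isPath hT r x).takeUntil hy
    have hdrop : ((pth hT r x).dropUntil y hy).IsPath := (pth_isPath hT r x).dropUntil hy
    have hspec := (pth hT r x).take_spec hy
    have htak : (pth hT r x).takeUntil y hy = pth hT r y := pth_unique hT _ htake
    -- the drop part is a path from y to x; the single edge is also a path; unique
    have hedge : (Walk.cons hadj.symm Walk.nil : G.Walk y x).IsPath := by
      simp [Walk.cons_isPath_iff]
      exact fun hxy => hadj.ne (hxy ▸ rfl)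
    have := hT.IsAcyclic.path_unique ⟨(pth hT r x).dropUntil y hy, hdrop⟩ ⟨_, hedge⟩
    have hdropeq : (pth hT r x).dropUntil y hy = Walk.cons hadj.symm Walk.nil :=
      congrArg Subtype.val this
    rw [← hspec, hdropeq, Walk.concat_eq_append, htak]
  · left
    have : ((pth hT r x).concat hadj).IsPath := by
      rw [← Walk.isPath_reverse_iff, Walk.reverse_concat]
      rw [Walk.cons_isPath_iff]
      refine ⟨(Walk.isPath_reverse_iff _).2 (pth_isPath hT r x), ?_⟩
      rwa [Walk.support_reverse, List.mem_reverse]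
    exact (pth_unique hT _ this).symm

end TreeMono

namespace TreeMono

variable {W : Type} {G : SimpleGraph W} {r : W}

attribute [local instance] Classical.propDecidable Classical.decEq

lemma dist_dichotomy (hT : G.IsTree) (r : W) {x y : W} (hadj : G.Adj x y) :
    G.dist r y = G.dist r x + 1 ∨ G.dist r x = G.dist r y + 1 := by
  rcases pth_dichotomy hT r hadj with hc | hc
  · left
    rw [dist_eq_pth_length hT r y, dist_eq_pth_length hT r x, hc, Walk.length_concat]
  · right
    rw [dist_eq_pth_length hT r y, dist_eq_pth_length hT r x, hc, Walk.length_concat]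

lemma dist_zero_iff (hT : G.IsTree) (r x : W) : G.dist r x = 0 ↔ x = r := by
  rw [hT.isConnected.dist_eq_zero_iff]
  exact eq_comm

lemma exists_parent (hT : G.IsTree) {r x : W} (hx : x ≠ r) :
    ∃ (u : W) (hadj : G.Adj u x) (q : G.Walk r u), pth hT r x = q.concat hadj := by
  have hlen : (pth hT r x).length ≠ 0 := by
    rw [← dist_eq_pth_length]
    intro h0
    exact hx ((dist_zero_iff hT r x).1 h0)
  have hnn : ¬ (pth hT r x).reverse.Nil := by
    rw [Walk.nil_iff_length_eq, Walk.length_reverse]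
    exact hlen
  obtain ⟨u, hadj, q, hq⟩ := Walk.not_nil_iff.mp hnn
  refine ⟨u, hadj.symm, q.reverse, ?_⟩
  have := congrArg Walk.reverse hq
  rwa [Walk.reverse_reverse, Walk.reverse_cons] at this

noncomputable def par (hT : G.IsTree) (r x : W) : W :=
  if hx : x = r then r else (exists_parent hT hx).choose

lemma par_spec (hT : G.IsTree) {r x : W} (hx : x ≠ r) :
    ∃ (hadj : G.Adj (par hT r x) x), pth hT r x = (pth hT r (par hT r x)).concat hadj := by
  rw [par, dif_neg hx]
  obtain ⟨hadj, q, hq⟩ := (exists_parent hT hx).choose_spec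
  refine ⟨hadj, ?_⟩
  have hqp : q.IsPath := by
    have := pth_isPath hT r x
    rw [hq, Walk.concat_eq_append] at this
    exact this.of_append_left
  exact hq.trans (congrArg (fun w => Walk.concat w hadj) (pth_unique hT q hqp))

lemma par_adj (hT : G.IsTree) {r x : W} (hx : x ≠ r) : G.Adj (par hT r x) x :=
  (par_spec hT hx).1

lemma dist_par (hT : G.IsTree) {r x : W} (hx : x ≠ r) :
    G.dist r (par hT r x) + 1 = G.dist r x := by
  obtain ⟨hadj, hq⟩ := par_spec hT hx
  rw [dist_eq_pth_length hT r x, dist_eq_pth_length hT r (par hT r x), hq, Walk.length_concat]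

lemma par_eq_of (hT : G.IsTree) {r x u : W} (hadj : G.Adj u x)
    (hd : G.dist r x = G.dist r u + 1) : par hT r x = u := by
  have hx : x ≠ r := by
    intro hxr
    rw [hxr, (dist_zero_iff hT r r).2 rfl] at hd
    omega
  obtain ⟨hadj', hq⟩ := par_spec hT hx
  have hdi : pth hT r x = (pth hT r u).concat hadj := by
    rcases pth_dichotomy hT r hadj with hc | hc
    · exact hc
    · exfalso
      have := dist_eq_pth_length hT r u
      rw [hc, Walk.length_concat, ← dist_eq_pth_length hT r x] at this
      omega
  rw [hdi] at hq
  obtain ⟨hv, -⟩ := Walk.concat_inj hq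
  exact hv.symm

end TreeMono

namespace TreeMono

attribute [local instance] Classical.propDecidable Classical.decEq

variable {Δ : ℕ} {W : Type} [Fintype W] {G : SimpleGraph W} {r : W}

/-- children of `x` -/
abbrev Ch (G : SimpleGraph W) (r x : W) : Type :=
  {y : W // G.Adj x y ∧ G.dist r y = G.dist r x + 1}

noncomputable def chEmb (hdeg : ∀ x : W, Nat.card (G.neighborSet x) ≤ Δ) (x : W) :
    Ch G r x ↪ Fin Δ := by
  have h1 : Nat.card (Ch G r x) ≤ Nat.card (G.neighborSet x) := by
    refine Nat.card_le_card_of_injective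
      (fun y : Ch G r x => (⟨y.1, y.2.1⟩ : G.neighborSet x)) ?_
    intro a b hab
    exact Subtype.ext (by simpa using congrArg Subtype.val hab)
  have h2 : Nat.card (Ch G r x) ≤ Δ := le_trans h1 (hdeg x)
  have h3 : Fintype.card (Ch G r x) ≤ Fintype.card (Fin Δ) := by
    rw [← Nat.card_eq_fintype_card, ← Nat.card_eq_fintype_card]
    simpa using h2
  exact (Function.Embedding.nonempty_of_card_le h3).some

/-- the label of `y` as a child of `u` -/
noncomputable def lab (hΔ : 1 ≤ Δ) (ι : ∀ x : W, Ch G r x ↪ Fin Δ) (u y : W) : Fin Δ :=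
  if hy : G.Adj u y ∧ G.dist r y = G.dist r u + 1 then ι u ⟨y, hy⟩ else ⟨0, hΔ⟩

lemma lab_inj {hΔ : 1 ≤ Δ} {ι : ∀ x : W, Ch G r x ↪ Fin Δ} {u y z : W}
    (hy : G.Adj u y ∧ G.dist r y = G.dist r u + 1)
    (hz : G.Adj u z ∧ G.dist r z = G.dist r u + 1)
    (heq : lab hΔ ι u y = lab hΔ ι u z) : y = z := by
  rw [lab, lab, dif_pos hy, dif_pos hz] at heq
  exact congrArg Subtype.val ((ι u).injective heq)

noncomputable def phiAux (hT : G.IsTree) (r : W) (hΔ : 1 ≤ Δ)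
    (ι : ∀ x : W, Ch G r x ↪ Fin Δ) : ℕ → W → List (Fin Δ)
  | 0, _ => []
  | n+1, x =>
    if x = r then []
    else lab hΔ ι (par hT r x) x :: phiAux hT r hΔ ι n (par hT r x)

variable {hT : G.IsTree} {hΔ : 1 ≤ Δ} {ι : ∀ x : W, Ch G r x ↪ Fin Δ}

lemma phiAux_length : ∀ (n : ℕ) (x : W), G.dist r x = n →
    (phiAux hT r hΔ ι n x).length = n := by
  intro n
  induction n with
  | zero => intro x _; rfl
  | succ n ih =>
    intro x hd
    have hx : x ≠ r := by
      intro hxr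
      rw [hxr, (dist_zero_iff hT r r).2 rfl] at hd
      omega
    have hdp : G.dist r (par hT r x) = n := by
      have := dist_par hT hx
      omega
    rw [phiAux, if_neg hx, List.length_cons, ih _ hdp]

lemma phiAux_inj : ∀ (n : ℕ) (x y : W), G.dist r x = n → G.dist r y = n →
    phiAux hT r hΔ ι n x = phiAux hT r hΔ ι n y → x = y := by
  intro n
  induction n with
  | zero =>
    intro x y hx hy _
    rw [(dist_zero_iff hT r x).1 hx, (dist_zero_iff hT r y).1 hy]
  | succ n ih =>
    intro x y hdx hdy heq
    have hx : x ≠ r := by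
      intro hxr; rw [hxr, (dist_zero_iff hT r r).2 rfl] at hdx; omega
    have hy : y ≠ r := by
      intro hyr; rw [hyr, (dist_zero_iff hT r r).2 rfl] at hdy; omega
    simp only [phiAux, if_neg hx, if_neg hy, List.cons.injEq] at heq
    obtain ⟨hheads, htails⟩ := heq
    have hdpx : G.dist r (par hT r x) = n := by have := dist_par hT hx; omega
    have hdpy : G.dist r (par hT r y) = n := by have := dist_par hT hy; omega
    have hpar : par hT r x = par hT r y := ih _ _ hdpx hdpy htails
    rw [hpar] at hheads
    exact lab_inj (hpar ▸ ⟨par_adj hT hx, (dist_par hT hx).symm⟩)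
      ⟨par_adj hT hy, (dist_par hT hy).symm⟩ hheads

end TreeMono

set_option linter.unusedSectionVars false

namespace TreeMono

attribute [local instance] Classical.propDecidable Classical.decEq

variable {Δ h : ℕ} {W : Type} [Fintype W] {G : SimpleGraph W} {r : W}

lemma ct_adj {a b : TVert Δ h} :
    (completeTree Δ h).Adj a b ↔ (∃ i, b.1 = i :: a.1) ∨ (∃ i, a.1 = i :: b.1) := by
  rw [completeTree, SimpleGraph.fromRel_adj]
  constructor
  · rintro ⟨-, hc⟩; exact hc
  · intro hc
    refine ⟨?_, hc⟩
    rintro rfl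
    rcases hc with ⟨i, hi⟩ | ⟨i, hi⟩ <;>
      exact absurd (congrArg List.length hi) (by simp)

variable (hT : G.IsTree) (hΔ : 1 ≤ Δ) (ι : ∀ x : W, Ch G r x ↪ Fin Δ)
  (hdist : ∀ x : W, G.dist r x ≤ h)

noncomputable def phi (x : W) : TVert Δ h :=
  ⟨phiAux hT r hΔ ι (G.dist r x) x, by
    rw [phiAux_length _ _ rfl]; exact hdist x⟩

variable {hT hΔ ι hdist}

lemma phi_len (x : W) : ((phi hT hΔ ι hdist x).1).length = G.dist r x :=
  phiAux_length _ _ rfl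

lemma phi_root : phi hT hΔ ι hdist r = treeRoot Δ h := by
  apply Subtype.ext
  show phiAux hT r hΔ ι (G.dist r r) r = []
  rw [(dist_zero_iff hT r r).2 rfl]
  rfl

lemma phi_inj : Function.Injective (phi hT hΔ ι hdist) := by
  intro x y hxy
  have hval : phiAux hT r hΔ ι (G.dist r x) x = phiAux hT r hΔ ι (G.dist r y) y :=
    congrArg Subtype.val hxy
  have hlen : G.dist r x = G.dist r y := by
    have := congrArg List.length hval
    rwa [phiAux_length _ _ rfl, phiAux_length _ _ rfl] at this
  exact phiAux_inj (G.dist r x) x y rfl hlen.symm (by rw [hlen] at hval ⊢; exact hval)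

lemma phi_val {x : W} (hx : x ≠ r) :
    (phi hT hΔ ι hdist x).1 =
      lab hΔ ι (par hT r x) x :: (phi hT hΔ ι hdist (par hT r x)).1 := by
  show phiAux hT r hΔ ι (G.dist r x) x = _
  obtain ⟨m, hm⟩ : ∃ m, G.dist r x = m + 1 := by
    have h0 : G.dist r x ≠ 0 := fun hc => hx ((dist_zero_iff hT r x).1 hc)
    exact ⟨G.dist r x - 1, by omega⟩
  have hpm : G.dist r (par hT r x) = m := by have := dist_par hT hx; omega
  rw [hm, phiAux, if_neg hx]
  show _ :: phiAux hT r hΔ ι m (par hT r x) = _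
  congr 1
  show phiAux hT r hΔ ι m (par hT r x) = phiAux hT r hΔ ι (G.dist r (par hT r x)) (par hT r x)
  rw [hpm]

lemma phi_adj_iff (x y : W) :
    G.Adj x y ↔ (completeTree Δ h).Adj (phi hT hΔ ι hdist x) (phi hT hΔ ι hdist y) := by
  constructor
  · intro hadj
    rw [ct_adj]
    rcases dist_dichotomy hT r hadj with hc | hc
    · left
      have hpy : par hT r y = x := par_eq_of hT hadj hc
      have hy : y ≠ r := by
        intro hyr; rw [hyr, (dist_zero_iff hT r r).2 rfl] at hc; omega
      refine ⟨lab hΔ ι (par hT r y) y, ?_⟩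
      rw [phi_val hy, hpy]
    · right
      have hpx : par hT r x = y := par_eq_of hT hadj.symm hc
      have hx : x ≠ r := by
        intro hxr; rw [hxr, (dist_zero_iff hT r r).2 rfl] at hc; omega
      refine ⟨lab hΔ ι (par hT r x) x, ?_⟩
      rw [phi_val hx, hpx]
  · intro hadj
    rw [ct_adj] at hadj
    have key : ∀ u v : W, (∃ i, (phi hT hΔ ι hdist v).1 = i :: (phi hT hΔ ι hdist u).1) →
        G.Adj u v := by
      intro u v ⟨i, hi⟩
      have hv : v ≠ r := by
        intro hvr
        rw [hvr] at hi
        have := congrArg List.length hi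
        rw [phi_len, (dist_zero_iff hT r r).2 rfl] at this
        simp at this
      rw [phi_val hv] at hi
      have htails : (phi hT hΔ ι hdist (par hT r v)).1 = (phi hT hΔ ι hdist u).1 :=
        (List.cons.inj hi.symm).2.symm
      have : par hT r v = u := phi_inj (Subtype.ext htails)
      rw [← this]
      exact par_adj hT hv
    rcases hadj with hc | hc
    · exact key x y hc
    · exact (key y x hc).symm

lemma phi_tail (x : W) : ∃ y : W, (phi hT hΔ ι hdist y).1 = (phi hT hΔ ι hdist x).1.tail := by
  by_cases hx : x = r
  · refine ⟨r, ?_⟩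
    subst hx
    rw [congrArg Subtype.val (phi_root (hT := hT))]
    rfl
  · refine ⟨par hT r x, ?_⟩
    rw [phi_val hx]
    rfl

end TreeMono

namespace TreeMono

attribute [local instance] Classical.propDecidable Classical.decEq

instance TVert.finite (Δ h : ℕ) : Finite (TVert Δ h) := by
  refine Finite.of_injective
    (fun s : TVert Δ h => (fun i : Fin h => s.1[(i : ℕ)]? : Fin h → Option (Fin Δ))) ?_
  intro a b hab
  apply Subtype.ext
  apply List.ext_getElem?
  intro n
  by_cases hn : n < h
  · exact congrFun hab ⟨n, hn⟩
  · rw [List.getElem?_eq_none (le_trans a.2 (not_lt.1 hn)),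
      List.getElem?_eq_none (le_trans b.2 (not_lt.1 hn))]

section Counting

variable {Δ h k : ℕ} {W : Type} [Fintype W] {G : SimpleGraph W} {r : W}
  (φ : W → TVert Δ h)

/-- membership in the image of `φ` -/
def imgL (l : List (Fin Δ)) : Prop := ∃ x : W, (φ x).1 = l

/-- `x` is the attachment point for `l` : `φ x` is the longest suffix of `l` in the image -/
def AttP (l : List (Fin Δ)) (x : W) : Prop :=
  (φ x).1 <:+ l ∧ ∀ y : W, (φ y).1 <:+ l → (φ y).1.length ≤ (φ x).1.length

lemma att_exists (hroot : (φ r).1 = []) (l : List (Fin Δ)) : ∃ x : W, AttP φ l x := by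
  classical
  have hne : (Finset.univ.filter (fun y : W => (φ y).1 <:+ l)).Nonempty := by
    refine ⟨r, ?_⟩
    simp only [Finset.mem_filter, Finset.mem_univ, true_and, hroot]
    exact List.nil_suffix
  obtain ⟨x, hx, hmax⟩ := Finset.exists_max_image _ (fun y => (φ y).1.length) hne
  simp only [Finset.mem_filter, Finset.mem_univ, true_and] at hx
  refine ⟨x, hx, fun y hy => ?_⟩
  exact hmax y (by simp only [Finset.mem_filter, Finset.mem_univ, true_and]; exact hy)

lemma suffix_eq_of_length {α : Type*} {s t l : List α} (hs : s <:+ l) (ht : t <:+ l)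
    (hlen : s.length = t.length) : s = t := by
  have h1 : s = l.drop (l.length - s.length) := by obtain ⟨u, rfl⟩ := hs; simp
  have h2 : t = l.drop (l.length - t.length) := by obtain ⟨u, rfl⟩ := ht; simp
  rw [h1, h2, hlen]

lemma att_unique (hinj : Function.Injective φ) {l : List (Fin Δ)} {x y : W}
    (h1 : AttP φ l x) (h2 : AttP φ l y) : x = y := by
  have hlen : (φ x).1.length = (φ y).1.length :=
    le_antisymm (h2.2 x h1.1) (h1.2 y h2.1)
  exact hinj (Subtype.ext (suffix_eq_of_length h1.1 h2.1 hlen))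

noncomputable def att (hroot : (φ r).1 = []) (l : List (Fin Δ)) : W :=
  (att_exists φ hroot l).choose

lemma att_spec (hroot : (φ r).1 = []) (l : List (Fin Δ)) : AttP φ l (att φ hroot l) :=
  (att_exists φ hroot l).choose_spec

lemma att_img (hroot : (φ r).1 = []) (hinj : Function.Injective φ)
    {l : List (Fin Δ)} {x : W} (hx : (φ x).1 = l) : att φ hroot l = x := by
  refine att_unique φ hinj (att_spec φ hroot l) ⟨hx ▸ List.suffix_refl _, fun y hy => ?_⟩
  rw [hx]
  exact hy.length_le

lemma att_cons (hroot : (φ r).1 = []) (hinj : Function.Injective φ)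
    {l : List (Fin Δ)} {i : Fin Δ} (hni : ¬ imgL φ (i :: l)) :
    att φ hroot (i :: l) = att φ hroot l := by
  refine att_unique φ hinj ?_ (att_spec φ hroot l)
  obtain ⟨hsuf, hmax⟩ := att_spec φ hroot (i :: l)
  have hsuf' : (φ (att φ hroot (i :: l))).1 <:+ l := by
    rcases List.suffix_cons_iff.1 hsuf with hc | hc
    · exact absurd ⟨_, hc⟩ hni
    · exact hc
  exact ⟨hsuf', fun y hy => hmax y (hy.trans (List.suffix_cons i l))⟩

lemma att_val (hroot : (φ r).1 = []) (hinj : Function.Injective φ)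
    {l : List (Fin Δ)} (himg : imgL φ l) : (φ (att φ hroot l)).1 = l := by
  obtain ⟨x, hx⟩ := himg
  rw [att_img φ hroot hinj hx, hx]

end Counting

end TreeMono

namespace TreeMono

attribute [local instance] Classical.propDecidable Classical.decEq

variable {Δ h k : ℕ} {W : Type} [Fintype W] {G : SimpleGraph W} {r : W}

/-- A good embedding of the rooted tree `(G, r)` into the complete tree. -/
structure GoodEmb (Δ h : ℕ) (W : Type) (G : SimpleGraph W) (r : W) : Type where
  φ : W → TVert Δ h
  inj : Function.Injective φ
  root : (φ r).1 = []
  len : ∀ x, (φ x).1.length = G.dist r x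
  adj : ∀ x y, G.Adj x y ↔ (completeTree Δ h).Adj (φ x) (φ y)
  tail : ∀ x, ∃ y, (φ y).1 = (φ x).1.tail

def properT (Δ h k : ℕ) (f : TVert Δ h → Fin k) : Prop :=
  ∀ a b : TVert Δ h, (completeTree Δ h).Adj a b → f a ≠ f b

def properG (G : SimpleGraph W) (k : ℕ) (τ : W → Fin k) : Prop :=
  ∀ ⦃x y : W⦄, G.Adj x y → τ x ≠ τ y

lemma properT_of {f : TVert Δ h → Fin k}
    (hf : ∀ (a b : TVert Δ h) (i : Fin Δ), b.1 = i :: a.1 → f a ≠ f b) :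
    properT Δ h k f := by
  intro a b hab
  rcases ct_adj.1 hab with ⟨i, hi⟩ | ⟨i, hi⟩
  · exact hf a b i hi
  · exact (hf b a i hi).symm

variable (e : GoodEmb Δ h W G r)

lemma img_tail {i : Fin Δ} {l : List (Fin Δ)} (himg : imgL e.φ (i :: l)) : imgL e.φ l := by
  obtain ⟨x, hx⟩ := himg
  obtain ⟨y, hy⟩ := e.tail x
  exact ⟨y, by rw [hy, hx]; rfl⟩

lemma adj_of_cons {x y : W} {i : Fin Δ} (hxy : (e.φ y).1 = i :: (e.φ x).1) : G.Adj x y :=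
  (e.adj x y).2 (ct_adj.2 (Or.inl ⟨i, hxy⟩))

/-- proper colourings of the complete tree extending the pullback colouring `τ` -/
def ESet (e : GoodEmb Δ h W G r) (k : ℕ) (τ : W → Fin k) : Type :=
  {ζ : TVert Δ h → Fin k // properT Δ h k ζ ∧ ∀ x : W, ζ (e.φ x) = τ x}

noncomputable def swapF (τ τ' : W → Fin k) (ζ : TVert Δ h → Fin k) :
    TVert Δ h → Fin k := fun s =>
  if imgL e.φ s.1 then τ' (att e.φ e.root s.1)
  else Equiv.swap (τ (att e.φ e.root s.1)) (τ' (att e.φ e.root s.1)) (ζ s)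

lemma swapF_mem {τ τ' : W → Fin k} (hτ' : properG G k τ')
    {ζ : TVert Δ h → Fin k} (hζ : properT Δ h k ζ ∧ ∀ x : W, ζ (e.φ x) = τ x) :
    properT Δ h k (swapF e τ τ' ζ) ∧ ∀ x : W, swapF e τ τ' ζ (e.φ x) = τ' x := by
  constructor
  · refine properT_of ?_
    intro a b i hi
    have hadj : (completeTree Δ h).Adj a b := ct_adj.2 (Or.inl ⟨i, hi⟩)
    by_cases hb : imgL e.φ b.1
    · have ha : imgL e.φ a.1 := img_tail e (hi ▸ hb)
      simp only [swapF, if_pos ha, if_pos hb]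
      have hb' : (e.φ (att e.φ e.root b.1)).1 = i :: (e.φ (att e.φ e.root a.1)).1 := by
        rw [att_val e.φ e.root e.inj ha, att_val e.φ e.root e.inj hb, hi]
      exact hτ' (adj_of_cons e hb')
    · have hatt : att e.φ e.root b.1 = att e.φ e.root a.1 := by
        conv_lhs => rw [hi]
        exact att_cons e.φ e.root e.inj (hi ▸ hb)
      by_cases ha : imgL e.φ a.1
      · simp only [swapF, if_pos ha, if_neg hb, hatt]
        have hφa : e.φ (att e.φ e.root a.1) = a :=
          Subtype.ext (att_val e.φ e.root e.inj ha)
        have hζa : ζ a = τ (att e.φ e.root a.1) := by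
          conv_lhs => rw [← hφa]
          exact hζ.2 _
        have hζb : ζ b ≠ τ (att e.φ e.root a.1) :=
          fun hc => hζ.1 a b hadj (hζa.trans hc.symm)
        have hne := (Equiv.swap (τ (att e.φ e.root a.1))
          (τ' (att e.φ e.root a.1))).injective.ne hζb
        rw [Equiv.swap_apply_left] at hne
        exact hne.symm
      · simp only [swapF, if_neg ha, if_neg hb, hatt]
        have hζab : ζ a ≠ ζ b := hζ.1 a b hadj
        exact fun hc => hζab ((Equiv.swap _ _).injective hc)
  · intro x
    have himg : imgL e.φ (e.φ x).1 := ⟨x, rfl⟩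
    simp only [swapF, if_pos himg, att_img e.φ e.root e.inj rfl]

lemma swapF_invol {τ τ' : W → Fin k}
    {ζ : TVert Δ h → Fin k} (hζ : properT Δ h k ζ ∧ ∀ x : W, ζ (e.φ x) = τ x) :
    swapF e τ' τ (swapF e τ τ' ζ) = ζ := by
  funext s
  by_cases hs : imgL e.φ s.1
  · simp only [swapF, if_pos hs]
    have hφs : e.φ (att e.φ e.root s.1) = s := Subtype.ext (att_val e.φ e.root e.inj hs)
    conv_rhs => rw [← hφs]
    exact (hζ.2 _).symm
  · simp only [swapF, if_neg hs]
    rw [Equiv.swap_comm]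
    exact Equiv.swap_apply_self _ _ _

lemma card_ESet_const {τ τ' : W → Fin k} (hτ : properG G k τ) (hτ' : properG G k τ') :
    Nat.card (ESet e k τ) = Nat.card (ESet e k τ') := by
  refine Nat.card_congr ?_
  exact {
    toFun := fun ζ => ⟨swapF e τ τ' ζ.1, swapF_mem e hτ' ζ.2⟩
    invFun := fun ζ => ⟨swapF e τ' τ ζ.1, swapF_mem e hτ ζ.2⟩
    left_inv := fun ζ => Subtype.ext (swapF_invol e ζ.2)
    right_inv := fun ζ => Subtype.ext (swapF_invol e ζ.2) }

/-- greedy extension of a colouring to the whole tree -/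
noncomputable def ext0 (hk : 0 < k) (τ : W → Fin k) : List (Fin Δ) → Fin k
  | [] => τ r
  | (i :: l) =>
    if imgL e.φ (i :: l) then τ (att e.φ e.root (i :: l))
    else ⟨((ext0 hk τ l).1 + 1) % k, Nat.mod_lt _ hk⟩

lemma ext0_img (hk : 0 < k) (τ : W → Fin k) {l : List (Fin Δ)} (himg : imgL e.φ l) :
    ext0 e hk τ l = τ (att e.φ e.root l) := by
  cases l with
  | nil =>
    rw [att_img e.φ e.root e.inj e.root]
    rfl
  | cons i l => rw [ext0, if_pos himg]

lemma ESet_nonempty (hk2 : 2 ≤ k) {τ : W → Fin k} (hτ : properG G k τ) :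
    Nonempty (ESet e k τ) := by
  have hk : 0 < k := by omega
  refine ⟨⟨fun s => ext0 e hk τ s.1, ?_, ?_⟩⟩
  · refine properT_of ?_
    intro a b i hi
    show ext0 e hk τ a.1 ≠ ext0 e hk τ b.1
    rw [hi]
    by_cases hb : imgL e.φ (i :: a.1)
    · have ha : imgL e.φ a.1 := img_tail e hb
      rw [ext0_img e hk τ ha, ext0_img e hk τ hb]
      have hb' : (e.φ (att e.φ e.root (i :: a.1))).1 = i :: (e.φ (att e.φ e.root a.1)).1 := by
        rw [att_val e.φ e.root e.inj ha, att_val e.φ e.root e.inj hb]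
      exact hτ (adj_of_cons e hb')
    · rw [ext0, if_neg hb]
      intro hc
      have := congrArg Fin.val hc
      simp only at this
      rcases Nat.lt_or_ge ((ext0 e hk τ a.1).1 + 1) k with hlt | hge
      · rw [Nat.mod_eq_of_lt hlt] at this
        omega
      · have hv := (ext0 e hk τ a.1).2
        have hveq : (ext0 e hk τ a.1).1 + 1 = k := by omega
        rw [hveq, Nat.mod_self] at this
        omega
  · intro x
    show ext0 e hk τ (e.φ x).1 = τ x
    rw [ext0_img e hk τ ⟨x, rfl⟩, att_img e.φ e.root e.inj rfl]

lemma nat_card_fiber {α β : Type*} [Finite α] [Fintype β] (f : α → β) :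
    Nat.card α = ∑ b : β, Nat.card {a : α // f a = b} := by
  classical
  haveI : Fintype α := Fintype.ofFinite _
  haveI : ∀ b : β, Fintype {a : α // f a = b} := fun b => Fintype.ofFinite _
  simp only [Nat.card_eq_fintype_card]
  rw [← Fintype.card_sigma]
  exact (Fintype.card_congr (Equiv.sigmaFiberEquiv f)).symm

instance ESet_finite (e : GoodEmb Δ h W G r) (k : ℕ) (τ : W → Fin k) :
    Finite (ESet e k τ) := by
  unfold ESet
  infer_instance

lemma cardZ_eq (hk2 : 2 ≤ k) (σ : W → Fin k) (hσ : properG G k σ) :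
    Nat.card {ζ : TVert Δ h → Fin k //
        properT Δ h k ζ ∧ ∀ x : W, G.dist r x = h → ζ (e.φ x) = σ x} =
      Nat.card {τ : W → Fin k // properG G k τ ∧ ∀ x : W, G.dist r x = h → τ x = σ x} *
        Nat.card (ESet e k σ) := by
  classical
  set A := {τ : W → Fin k // properG G k τ ∧ ∀ x : W, G.dist r x = h → τ x = σ x} with hA
  set Z := {ζ : TVert Δ h → Fin k //
      properT Δ h k ζ ∧ ∀ x : W, G.dist r x = h → ζ (e.φ x) = σ x} with hZ
  haveI : Fintype A := Fintype.ofFinite _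
  have fdef : ∀ ζ : Z, properG G k (fun x => ζ.1 (e.φ x)) ∧
      ∀ x : W, G.dist r x = h → ζ.1 (e.φ x) = σ x := by
    intro ζ
    exact ⟨fun x y hxy => ζ.2.1 _ _ ((e.adj x y).1 hxy), ζ.2.2⟩
  set f : Z → A := fun ζ => ⟨fun x => ζ.1 (e.φ x), fdef ζ⟩ with hf
  rw [nat_card_fiber f]
  have hfib : ∀ τ : A, Nat.card {ζ : Z // f ζ = τ} = Nat.card (ESet e k σ) := by
    intro τ
    have h1 : Nat.card {ζ : Z // f ζ = τ} = Nat.card (ESet e k τ.1) := by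
      refine Nat.card_congr ?_
      exact {
        toFun := fun p => ⟨p.1.1, p.1.2.1,
          fun x => congrFun (congrArg Subtype.val p.2) x⟩
        invFun := fun ζ => ⟨⟨ζ.1, ζ.2.1, fun x hx => by
            rw [ζ.2.2 x]; exact τ.2.2 x hx⟩,
          Subtype.ext (funext fun x => ζ.2.2 x)⟩
        left_inv := fun p => Subtype.ext (Subtype.ext rfl)
        right_inv := fun ζ => Subtype.ext rfl }
    rw [h1]
    exact card_ESet_const e τ.2.1 hσ
  haveI : Fintype (ESet e k σ) := Fintype.ofFinite _
  rw [Finset.sum_congr rfl (fun τ _ => hfib τ), Finset.sum_const, Finset.card_univ,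
    smul_eq_mul, Nat.card_eq_fintype_card, Nat.card_eq_fintype_card]

lemma cardZc_eq (hk2 : 2 ≤ k) (σ : W → Fin k) (hσ : properG G k σ) (c : Fin k) :
    Nat.card {ζ : TVert Δ h → Fin k //
        properT Δ h k ζ ∧ (∀ x : W, G.dist r x = h → ζ (e.φ x) = σ x) ∧
          ζ (treeRoot Δ h) = c} =
      Nat.card {τ : W → Fin k // properG G k τ ∧
          (∀ x : W, G.dist r x = h → τ x = σ x) ∧ τ r = c} *
        Nat.card (ESet e k σ) := by
  classical
  have hroot' : e.φ r = treeRoot Δ h := Subtype.ext e.root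
  set A := {τ : W → Fin k // properG G k τ ∧
      (∀ x : W, G.dist r x = h → τ x = σ x) ∧ τ r = c} with hA
  set Z := {ζ : TVert Δ h → Fin k //
      properT Δ h k ζ ∧ (∀ x : W, G.dist r x = h → ζ (e.φ x) = σ x) ∧
        ζ (treeRoot Δ h) = c} with hZ
  haveI : Fintype A := Fintype.ofFinite _
  have fdef : ∀ ζ : Z, properG G k (fun x => ζ.1 (e.φ x)) ∧
      (∀ x : W, G.dist r x = h → ζ.1 (e.φ x) = σ x) ∧ ζ.1 (e.φ r) = c := by
    intro ζ
    refine ⟨fun x y hxy => ζ.2.1 _ _ ((e.adj x y).1 hxy), ζ.2.2.1, ?_⟩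
    rw [hroot']
    exact ζ.2.2.2
  set f : Z → A := fun ζ => ⟨fun x => ζ.1 (e.φ x), fdef ζ⟩ with hf
  rw [nat_card_fiber f]
  have hfib : ∀ τ : A, Nat.card {ζ : Z // f ζ = τ} = Nat.card (ESet e k σ) := by
    intro τ
    have h1 : Nat.card {ζ : Z // f ζ = τ} = Nat.card (ESet e k τ.1) := by
      refine Nat.card_congr ?_
      exact {
        toFun := fun p => ⟨p.1.1, p.1.2.1,
          fun x => congrFun (congrArg Subtype.val p.2) x⟩
        invFun := fun ζ => ⟨⟨ζ.1, ζ.2.1, fun x hx => by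
            rw [ζ.2.2 x]; exact τ.2.2.1 x hx, by rw [← hroot', ζ.2.2 r]; exact τ.2.2.2⟩,
          Subtype.ext (funext fun x => ζ.2.2 x)⟩
        left_inv := fun p => Subtype.ext (Subtype.ext rfl)
        right_inv := fun ζ => Subtype.ext rfl }
    rw [h1]
    exact card_ESet_const e τ.2.1 hσ
  haveI : Fintype (ESet e k σ) := Fintype.ofFinite _
  rw [Finset.sum_congr rfl (fun τ _ => hfib τ), Finset.sum_const, Finset.card_univ,
    smul_eq_mul, Nat.card_eq_fintype_card, Nat.card_eq_fintype_card]

end TreeMono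

namespace TreeMono

attribute [local instance] Classical.propDecidable Classical.decEq

variable {Δ h k : ℕ} {W : Type} [Fintype W] {G : SimpleGraph W} {r : W}

theorem main_bound (e : GoodEmb Δ h W G r) (hk2 : 2 ≤ k) {δ : ℝ} (hδ : 0 ≤ δ)
    (H : ∀ σ' : TVert Δ h → Fin k,
      (∀ x y : TVert Δ h, (completeTree Δ h).Adj x y → σ' x ≠ σ' y) →
      ∀ c : Fin k,
        |(Nat.card {τ : TVert Δ h → Fin k //
              (∀ x y : TVert Δ h, (completeTree Δ h).Adj x y → τ x ≠ τ y) ∧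
              (∀ x : TVert Δ h, x.1.length = h → τ x = σ' x) ∧
              τ (treeRoot Δ h) = c} : ℝ) /
            (Nat.card {τ : TVert Δ h → Fin k //
              (∀ x y : TVert Δ h, (completeTree Δ h).Adj x y → τ x ≠ τ y) ∧
              (∀ x : TVert Δ h, x.1.length = h → τ x = σ' x)} : ℝ) -
          1 / (k : ℝ)| ≤ δ / (k : ℝ))
    (σ : W → Fin k) (hσ : properG G k σ) (c : Fin k) :
    |(Nat.card {τ : W → Fin k // properG G k τ ∧
      (∀ x : W, G.dist r x = h → τ x = σ x) ∧ τ r = c} : ℝ) /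
        (Nat.card {τ : W → Fin k // properG G k τ ∧
      (∀ x : W, G.dist r x = h → τ x = σ x)} : ℝ) - 1 / (k : ℝ)| ≤ δ / (k : ℝ) := by
  classical
  have hk0 : (0:ℝ) < k := by
    have : (2:ℝ) ≤ k := by exact_mod_cast hk2
    linarith
  letI : Fintype ({s : TVert Δ h // s.1.length = h} → Fin k) := Fintype.ofFinite _
  set R : (TVert Δ h → Fin k) → ({s : TVert Δ h // s.1.length = h} → Fin k) :=
    fun ζ s => ζ s.1 with hRdef
  have hZsum : Nat.card {ζ : TVert Δ h → Fin k //
      properT Δ h k ζ ∧ ∀ x : W, G.dist r x = h → ζ (e.φ x) = σ x} = ∑ η, Nat.card {ζ : {ζ : TVert Δ h → Fin k //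
      properT Δ h k ζ ∧ ∀ x : W, G.dist r x = h → ζ (e.φ x) = σ x} // R ζ.1 = η} :=
    nat_card_fiber (fun ζ : {ζ : TVert Δ h → Fin k //
      properT Δ h k ζ ∧ ∀ x : W, G.dist r x = h → ζ (e.φ x) = σ x} => R ζ.1)
  have hZcsum : Nat.card {ζ : TVert Δ h → Fin k //
      properT Δ h k ζ ∧ (∀ x : W, G.dist r x = h → ζ (e.φ x) = σ x) ∧
        ζ (treeRoot Δ h) = c} = ∑ η, Nat.card {ζ : {ζ : TVert Δ h → Fin k //
      properT Δ h k ζ ∧ (∀ x : W, G.dist r x = h → ζ (e.φ x) = σ x) ∧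
        ζ (treeRoot Δ h) = c} // R ζ.1 = η} :=
    nat_card_fiber (fun ζ : {ζ : TVert Δ h → Fin k //
      properT Δ h k ζ ∧ (∀ x : W, G.dist r x = h → ζ (e.φ x) = σ x) ∧
        ζ (treeRoot Δ h) = c} => R ζ.1)
  have key : ∀ η : {s : TVert Δ h // s.1.length = h} → Fin k,
      ((Nat.card {ζ : {ζ : TVert Δ h → Fin k //
      properT Δ h k ζ ∧ (∀ x : W, G.dist r x = h → ζ (e.φ x) = σ x) ∧
        ζ (treeRoot Δ h) = c} // R ζ.1 = η} : ℝ) ≤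
        (1/(k:ℝ) + δ/k) * (Nat.card {ζ : {ζ : TVert Δ h → Fin k //
      properT Δ h k ζ ∧ ∀ x : W, G.dist r x = h → ζ (e.φ x) = σ x} // R ζ.1 = η} : ℝ)) ∧
      ((1/(k:ℝ) - δ/k) * (Nat.card {ζ : {ζ : TVert Δ h → Fin k //
      properT Δ h k ζ ∧ ∀ x : W, G.dist r x = h → ζ (e.φ x) = σ x} // R ζ.1 = η} : ℝ) ≤
        (Nat.card {ζ : {ζ : TVert Δ h → Fin k //
      properT Δ h k ζ ∧ (∀ x : W, G.dist r x = h → ζ (e.φ x) = σ x) ∧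
        ζ (treeRoot Δ h) = c} // R ζ.1 = η} : ℝ)) := by
    intro η
    by_cases hne : Nonempty {ζ : {ζ : TVert Δ h → Fin k //
      properT Δ h k ζ ∧ ∀ x : W, G.dist r x = h → ζ (e.φ x) = σ x} // R ζ.1 = η}
    · obtain ⟨ζη⟩ := hne
      haveI : Nonempty {ζ : {ζ : TVert Δ h → Fin k //
      properT Δ h k ζ ∧ ∀ x : W, G.dist r x = h → ζ (e.φ x) = σ x} // R ζ.1 = η} := ⟨ζη⟩
      have hden : Nat.card {ζ : {ζ : TVert Δ h → Fin k //
      properT Δ h k ζ ∧ ∀ x : W, G.dist r x = h → ζ (e.φ x) = σ x} // R ζ.1 = η} =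
          Nat.card {τ : TVert Δ h → Fin k //
            (∀ x y : TVert Δ h, (completeTree Δ h).Adj x y → τ x ≠ τ y) ∧
            (∀ x : TVert Δ h, x.1.length = h → τ x = ζη.1.1 x)} := by
        refine Nat.card_congr ?_
        exact {
          toFun := fun p => ⟨p.1.1, p.1.2.1,
            fun x hx => (congrFun p.2 ⟨x, hx⟩).trans (congrFun ζη.2 ⟨x, hx⟩).symm⟩
          invFun := fun q => ⟨⟨q.1, q.2.1, fun x hx => by
              rw [q.2.2 (e.φ x) (by rw [e.len x]; exact hx)]
              exact ζη.1.2.2 x hx⟩,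
            funext fun s => (q.2.2 s.1 s.2).trans (congrFun ζη.2 s)⟩
          left_inv := fun p => Subtype.ext (Subtype.ext rfl)
          right_inv := fun q => Subtype.ext rfl }
      have hnum : Nat.card {ζ : {ζ : TVert Δ h → Fin k //
      properT Δ h k ζ ∧ (∀ x : W, G.dist r x = h → ζ (e.φ x) = σ x) ∧
        ζ (treeRoot Δ h) = c} // R ζ.1 = η} =
          Nat.card {τ : TVert Δ h → Fin k //
            (∀ x y : TVert Δ h, (completeTree Δ h).Adj x y → τ x ≠ τ y) ∧
            (∀ x : TVert Δ h, x.1.length = h → τ x = ζη.1.1 x) ∧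
            τ (treeRoot Δ h) = c} := by
        refine Nat.card_congr ?_
        exact {
          toFun := fun p => ⟨p.1.1, p.1.2.1,
            fun x hx => (congrFun p.2 ⟨x, hx⟩).trans (congrFun ζη.2 ⟨x, hx⟩).symm,
            p.1.2.2.2⟩
          invFun := fun q => ⟨⟨q.1, q.2.1, fun x hx => by
              rw [q.2.2.1 (e.φ x) (by rw [e.len x]; exact hx)]
              exact ζη.1.2.2 x hx, q.2.2.2⟩,
            funext fun s => (q.2.2.1 s.1 s.2).trans (congrFun ζη.2 s)⟩
          left_inv := fun p => Subtype.ext (Subtype.ext rfl)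
          right_inv := fun q => Subtype.ext rfl }
      have hH := H ζη.1.1 ζη.1.2.1 c
      rw [← hden, ← hnum] at hH
      have hBpos : (0:ℝ) < (Nat.card {ζ : {ζ : TVert Δ h → Fin k //
      properT Δ h k ζ ∧ ∀ x : W, G.dist r x = h → ζ (e.φ x) = σ x} // R ζ.1 = η} : ℝ) := by
        have : 0 < Nat.card {ζ : {ζ : TVert Δ h → Fin k //
      properT Δ h k ζ ∧ ∀ x : W, G.dist r x = h → ζ (e.φ x) = σ x} // R ζ.1 = η} := Nat.card_pos
        exact_mod_cast this
      obtain ⟨hlo, hhi⟩ := abs_le.1 hH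
      constructor
      · have h1 : (Nat.card {ζ : {ζ : TVert Δ h → Fin k //
      properT Δ h k ζ ∧ (∀ x : W, G.dist r x = h → ζ (e.φ x) = σ x) ∧
        ζ (treeRoot Δ h) = c} // R ζ.1 = η} : ℝ) /
            (Nat.card {ζ : {ζ : TVert Δ h → Fin k //
      properT Δ h k ζ ∧ ∀ x : W, G.dist r x = h → ζ (e.φ x) = σ x} // R ζ.1 = η} : ℝ) ≤ 1/(k:ℝ) + δ/k := by linarith
        have := (div_le_iff₀ hBpos).1 h1
        linarith
      · have h1 : 1/(k:ℝ) - δ/k ≤ (Nat.card {ζ : {ζ : TVert Δ h → Fin k //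
      properT Δ h k ζ ∧ (∀ x : W, G.dist r x = h → ζ (e.φ x) = σ x) ∧
        ζ (treeRoot Δ h) = c} // R ζ.1 = η} : ℝ) /
            (Nat.card {ζ : {ζ : TVert Δ h → Fin k //
      properT Δ h k ζ ∧ ∀ x : W, G.dist r x = h → ζ (e.φ x) = σ x} // R ζ.1 = η} : ℝ) := by linarith
        have := (le_div_iff₀ hBpos).1 h1
        linarith
    · rw [not_nonempty_iff] at hne
      have h0 : Nat.card {ζ : {ζ : TVert Δ h → Fin k //
      properT Δ h k ζ ∧ ∀ x : W, G.dist r x = h → ζ (e.φ x) = σ x} // R ζ.1 = η} = 0 := Nat.card_of_isEmpty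
      have h0c : Nat.card {ζ : {ζ : TVert Δ h → Fin k //
      properT Δ h k ζ ∧ (∀ x : W, G.dist r x = h → ζ (e.φ x) = σ x) ∧
        ζ (treeRoot Δ h) = c} // R ζ.1 = η} = 0 := by
        haveI : IsEmpty {ζ : {ζ : TVert Δ h → Fin k //
      properT Δ h k ζ ∧ (∀ x : W, G.dist r x = h → ζ (e.φ x) = σ x) ∧
        ζ (treeRoot Δ h) = c} // R ζ.1 = η} := by
          refine Function.isEmpty (β := {ζ : {ζ : TVert Δ h → Fin k //
      properT Δ h k ζ ∧ ∀ x : W, G.dist r x = h → ζ (e.φ x) = σ x} // R ζ.1 = η}) ?_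
          exact fun p => ⟨⟨p.1.1, p.1.2.1, p.1.2.2.1⟩, p.2⟩
        exact Nat.card_of_isEmpty
      rw [h0, h0c]
      norm_num
  have hZcR : (Nat.card {ζ : TVert Δ h → Fin k //
      properT Δ h k ζ ∧ (∀ x : W, G.dist r x = h → ζ (e.φ x) = σ x) ∧
        ζ (treeRoot Δ h) = c} : ℝ) ≤ (1/(k:ℝ) + δ/k) * (Nat.card {ζ : TVert Δ h → Fin k //
      properT Δ h k ζ ∧ ∀ x : W, G.dist r x = h → ζ (e.φ x) = σ x} : ℝ) := by
    rw [hZcsum, hZsum]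
    push_cast
    calc (∑ η, (Nat.card {ζ : {ζ : TVert Δ h → Fin k //
      properT Δ h k ζ ∧ (∀ x : W, G.dist r x = h → ζ (e.φ x) = σ x) ∧
        ζ (treeRoot Δ h) = c} // R ζ.1 = η} : ℝ))
        ≤ ∑ η, (1/(k:ℝ) + δ/k) * (Nat.card {ζ : {ζ : TVert Δ h → Fin k //
      properT Δ h k ζ ∧ ∀ x : W, G.dist r x = h → ζ (e.φ x) = σ x} // R ζ.1 = η} : ℝ) :=
          Finset.sum_le_sum (fun η _ => (key η).1)
      _ = (1/(k:ℝ) + δ/k) * ∑ η, (Nat.card {ζ : {ζ : TVert Δ h → Fin k //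
      properT Δ h k ζ ∧ ∀ x : W, G.dist r x = h → ζ (e.φ x) = σ x} // R ζ.1 = η} : ℝ) := by
          rw [Finset.mul_sum]
  have hZcL : (1/(k:ℝ) - δ/k) * (Nat.card {ζ : TVert Δ h → Fin k //
      properT Δ h k ζ ∧ ∀ x : W, G.dist r x = h → ζ (e.φ x) = σ x} : ℝ) ≤ (Nat.card {ζ : TVert Δ h → Fin k //
      properT Δ h k ζ ∧ (∀ x : W, G.dist r x = h → ζ (e.φ x) = σ x) ∧
        ζ (treeRoot Δ h) = c} : ℝ) := by
    rw [hZcsum, hZsum]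
    push_cast
    calc (1/(k:ℝ) - δ/k) * (∑ η, (Nat.card {ζ : {ζ : TVert Δ h → Fin k //
      properT Δ h k ζ ∧ ∀ x : W, G.dist r x = h → ζ (e.φ x) = σ x} // R ζ.1 = η} : ℝ))
        = ∑ η, (1/(k:ℝ) - δ/k) * (Nat.card {ζ : {ζ : TVert Δ h → Fin k //
      properT Δ h k ζ ∧ ∀ x : W, G.dist r x = h → ζ (e.φ x) = σ x} // R ζ.1 = η} : ℝ) := by
          rw [Finset.mul_sum]
      _ ≤ ∑ η, (Nat.card {ζ : {ζ : TVert Δ h → Fin k //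
      properT Δ h k ζ ∧ (∀ x : W, G.dist r x = h → ζ (e.φ x) = σ x) ∧
        ζ (treeRoot Δ h) = c} // R ζ.1 = η} : ℝ) :=
          Finset.sum_le_sum (fun η _ => (key η).2)
  have hZeq := cardZ_eq e hk2 σ hσ
  have hZceq := cardZc_eq e hk2 σ hσ c
  haveI : Nonempty (ESet e k σ) := ESet_nonempty e hk2 hσ
  have hNpos : (0:ℝ) < (Nat.card (ESet e k σ) : ℝ) := by
    have : 0 < Nat.card (ESet e k σ) := Nat.card_pos
    exact_mod_cast this
  have hApos : (0:ℝ) < (Nat.card {τ : W → Fin k // properG G k τ ∧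
      (∀ x : W, G.dist r x = h → τ x = σ x)} : ℝ) := by
    haveI : Nonempty {τ : W → Fin k // properG G k τ ∧
      (∀ x : W, G.dist r x = h → τ x = σ x)} := ⟨⟨σ, hσ, fun x _ => rfl⟩⟩
    have : 0 < Nat.card {τ : W → Fin k // properG G k τ ∧
      (∀ x : W, G.dist r x = h → τ x = σ x)} := Nat.card_pos
    exact_mod_cast this
  have hZR : (Nat.card {ζ : TVert Δ h → Fin k //
      properT Δ h k ζ ∧ ∀ x : W, G.dist r x = h → ζ (e.φ x) = σ x} : ℝ) =
      (Nat.card {τ : W → Fin k // properG G k τ ∧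
      (∀ x : W, G.dist r x = h → τ x = σ x)} : ℝ) * (Nat.card (ESet e k σ) : ℝ) := by
    exact_mod_cast congrArg (Nat.cast (R := ℝ)) hZeq
  have hZcR2 : (Nat.card {ζ : TVert Δ h → Fin k //
      properT Δ h k ζ ∧ (∀ x : W, G.dist r x = h → ζ (e.φ x) = σ x) ∧
        ζ (treeRoot Δ h) = c} : ℝ) =
      (Nat.card {τ : W → Fin k // properG G k τ ∧
      (∀ x : W, G.dist r x = h → τ x = σ x) ∧ τ r = c} : ℝ) * (Nat.card (ESet e k σ) : ℝ) := by
    exact_mod_cast congrArg (Nat.cast (R := ℝ)) hZceq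
  rw [hZR, hZcR2] at hZcR hZcL
  have hup : (Nat.card {τ : W → Fin k // properG G k τ ∧
      (∀ x : W, G.dist r x = h → τ x = σ x) ∧ τ r = c} : ℝ) ≤ (1/(k:ℝ) + δ/k) * (Nat.card {τ : W → Fin k // properG G k τ ∧
      (∀ x : W, G.dist r x = h → τ x = σ x)} : ℝ) := by
    refine le_of_mul_le_mul_right ?_ hNpos
    calc (Nat.card {τ : W → Fin k // properG G k τ ∧
      (∀ x : W, G.dist r x = h → τ x = σ x) ∧ τ r = c} : ℝ) * (Nat.card (ESet e k σ) : ℝ)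
        ≤ (1/(k:ℝ) + δ/k) * ((Nat.card {τ : W → Fin k // properG G k τ ∧
      (∀ x : W, G.dist r x = h → τ x = σ x)} : ℝ) * (Nat.card (ESet e k σ) : ℝ)) := hZcR
      _ = ((1/(k:ℝ) + δ/k) * (Nat.card {τ : W → Fin k // properG G k τ ∧
      (∀ x : W, G.dist r x = h → τ x = σ x)} : ℝ)) * (Nat.card (ESet e k σ) : ℝ) := by ring
  have hlo2 : (1/(k:ℝ) - δ/k) * (Nat.card {τ : W → Fin k // properG G k τ ∧
      (∀ x : W, G.dist r x = h → τ x = σ x)} : ℝ) ≤ (Nat.card {τ : W → Fin k // properG G k τ ∧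
      (∀ x : W, G.dist r x = h → τ x = σ x) ∧ τ r = c} : ℝ) := by
    refine le_of_mul_le_mul_right ?_ hNpos
    calc ((1/(k:ℝ) - δ/k) * (Nat.card {τ : W → Fin k // properG G k τ ∧
      (∀ x : W, G.dist r x = h → τ x = σ x)} : ℝ)) * (Nat.card (ESet e k σ) : ℝ)
        = (1/(k:ℝ) - δ/k) * ((Nat.card {τ : W → Fin k // properG G k τ ∧
      (∀ x : W, G.dist r x = h → τ x = σ x)} : ℝ) * (Nat.card (ESet e k σ) : ℝ)) := by ring
      _ ≤ (Nat.card {τ : W → Fin k // properG G k τ ∧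
      (∀ x : W, G.dist r x = h → τ x = σ x) ∧ τ r = c} : ℝ) * (Nat.card (ESet e k σ) : ℝ) := hZcL
  rw [abs_le]
  constructor
  · have h2 : (1/(k:ℝ) - δ/k) ≤ (Nat.card {τ : W → Fin k // properG G k τ ∧
      (∀ x : W, G.dist r x = h → τ x = σ x) ∧ τ r = c} : ℝ) / (Nat.card {τ : W → Fin k // properG G k τ ∧
      (∀ x : W, G.dist r x = h → τ x = σ x)} : ℝ) := by
      rw [le_div_iff₀ hApos]
      linarith
    linarith
  · have h2 : (Nat.card {τ : W → Fin k // properG G k τ ∧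
      (∀ x : W, G.dist r x = h → τ x = σ x) ∧ τ r = c} : ℝ) / (Nat.card {τ : W → Fin k // properG G k τ ∧
      (∀ x : W, G.dist r x = h → τ x = σ x)} : ℝ) ≤ 1/(k:ℝ) + δ/k := by
      rw [div_le_iff₀ hApos]
      linarith
    linarith

end TreeMono

/-- Monotonicity of the uniqueness bound (Proposition 8.2).  Let `Δ, h ≥ 1`,
`k ≥ Δ + 2` and `δ ≥ 0`.  Suppose that for the complete `Δ`-ary rooted tree `T'` of
height `h`, for every proper `k`-colouring `σ'` and every colour `c`, a uniformly
random proper `k`-colouring `Y` of `T'` conditioned to agree with `σ'` on the leaves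
(depth-`h` vertices) satisfies `|Pr[Y(root) = c] - 1/k| ≤ δ/k`.  Then every finite
rooted tree `(G, r)` of height exactly `h` with maximum degree at most `Δ` satisfies
the same bound, with boundary set `L₀` the vertices at depth `h` (distance `h` from
the root `r`). -/
theorem tree_uniqueness_monotone (Δ h k : ℕ) (hΔ : 1 ≤ Δ) (hh : 1 ≤ h)
    (hk : Δ + 2 ≤ k) (δ : ℝ) (hδ : 0 ≤ δ)
    (H : ∀ σ' : TVert Δ h → Fin k,
      (∀ x y : TVert Δ h, (completeTree Δ h).Adj x y → σ' x ≠ σ' y) →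
      ∀ c : Fin k,
        |(Nat.card {τ : TVert Δ h → Fin k //
              (∀ x y : TVert Δ h, (completeTree Δ h).Adj x y → τ x ≠ τ y) ∧
              (∀ x : TVert Δ h, x.1.length = h → τ x = σ' x) ∧
              τ (treeRoot Δ h) = c} : ℝ) /
            (Nat.card {τ : TVert Δ h → Fin k //
              (∀ x y : TVert Δ h, (completeTree Δ h).Adj x y → τ x ≠ τ y) ∧
              (∀ x : TVert Δ h, x.1.length = h → τ x = σ' x)} : ℝ) -
          1 / (k : ℝ)| ≤ δ / (k : ℝ)) :
    ∀ (W : Type) (_ : Fintype W) (G : SimpleGraph W) (r : W),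
      G.IsTree → (∀ x : W, G.dist r x ≤ h) → (∃ x : W, G.dist r x = h) →
      (∀ x : W, Nat.card (G.neighborSet x) ≤ Δ) →
      ∀ σ : W → Fin k, (∀ ⦃x y : W⦄, G.Adj x y → σ x ≠ σ y) →
      ∀ c : Fin k,
        |(Nat.card {τ : W → Fin k //
              (∀ ⦃x y : W⦄, G.Adj x y → τ x ≠ τ y) ∧
              (∀ x : W, G.dist r x = h → τ x = σ x) ∧ τ r = c} : ℝ) /
            (Nat.card {τ : W → Fin k //
              (∀ ⦃x y : W⦄, G.Adj x y → τ x ≠ τ y) ∧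
              (∀ x : W, G.dist r x = h → τ x = σ x)} : ℝ) -
          1 / (k : ℝ)| ≤ δ / (k : ℝ) := by
  intro W instW G r hT hdist hht hdeg σ hσ c
  classical
  have hk2 : 2 ≤ k := by omega
  let ι : ∀ x : W, TreeMono.Ch G r x ↪ Fin Δ := TreeMono.chEmb (r := r) hdeg
  let e : TreeMono.GoodEmb Δ h W G r :=
    { φ := TreeMono.phi hT hΔ ι hdist
      inj := TreeMono.phi_inj
      root := by
        have := TreeMono.phi_root (hT := hT) (hΔ := hΔ) (ι := ι) (hdist := hdist)
        exact congrArg Subtype.val this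
      len := TreeMono.phi_len
      adj := TreeMono.phi_adj_iff
      tail := TreeMono.phi_tail }
  exact TreeMono.main_bound e hk2 hδ H σ hσ c
end

section
/- There exists d_0 > 0 such that for every real d ≥ d_0 there exists n_0 such that for every integer n ≥ n_0 the following holds. Let G be the Erdős–Rényi random graph G(n, d/n) on vertex set {1,…,n}, in which each of the n·(n−1)/2 possible edges is present independently with probability d/n. Then the probability that there exists a set S of vertices with 1 ≤ |S| ≤ (2/9)·(log n)/(log d) such that the number of edges of G with both endpoints in S is at least |S| + 1, is at most n^{−2/3}. -/
open scoped Classical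

noncomputable def allEdges (n : ℕ) : Finset (Sym2 (Fin n)) :=
  Finset.univ.filter fun e => ¬ e.IsDiag

def BadGraph (n : ℕ) (d : ℝ) (E : Finset (Sym2 (Fin n))) : Prop :=
  ∃ S : Finset (Fin n), 1 ≤ S.card ∧
    (S.card : ℝ) ≤ (2 / 9) * Real.log n / Real.log d ∧
    S.card + 1 ≤ (E.filter fun e => ∀ x ∈ e, x ∈ S).card

lemma sum_bern {α : Type*} [DecidableEq α] (p : ℝ) (A : Finset α) :
    ∑ E ∈ A.powerset, p ^ E.card * (1 - p) ^ (A.card - E.card) = 1 := by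
  induction A using Finset.induction_on with
  | empty => simp
  | @insert a s ha ih =>
    rw [Finset.powerset_insert, Finset.sum_union, Finset.sum_image]
    · have h1 : ∀ E ∈ s.powerset, p ^ E.card * (1 - p) ^ ((insert a s).card - E.card)
          = (1 - p) * (p ^ E.card * (1 - p) ^ (s.card - E.card)) := by
        intro E hE
        rw [Finset.card_insert_of_notMem ha]
        have hc : E.card ≤ s.card := Finset.card_le_card (Finset.mem_powerset.1 hE)
        rw [Nat.succ_sub hc, pow_succ]
        ring
      have h2 : ∀ E ∈ s.powerset, p ^ (insert a E).card * (1 - p) ^ ((insert a s).card - (insert a E).card)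
          = p * (p ^ E.card * (1 - p) ^ (s.card - E.card)) := by
        intro E hE
        have haE : a ∉ E := fun h => ha (Finset.mem_powerset.1 hE h)
        rw [Finset.card_insert_of_notMem ha, Finset.card_insert_of_notMem haE,
          Nat.succ_sub_succ, pow_succ]
        ring
      rw [Finset.sum_congr rfl h1, Finset.sum_congr rfl h2, ← Finset.mul_sum, ← Finset.mul_sum, ih]
      ring
    · intro E hE F hF h
      have haE : a ∉ E := fun h' => ha (Finset.mem_powerset.1 hE h')
      have haF : a ∉ F := fun h' => ha (Finset.mem_powerset.1 hF h')
      rw [← Finset.erase_insert haE, h, Finset.erase_insert haF]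
    · rw [Finset.disjoint_right]
      rintro E hE hE'
      obtain ⟨F, hF, rfl⟩ := Finset.mem_image.1 hE
      exact ha (Finset.mem_powerset.1 hE' (Finset.mem_insert_self a F))

lemma sum_cyl {α : Type*} [DecidableEq α] (p : ℝ) {A F : Finset α} (hF : F ⊆ A) :
    ∑ E ∈ A.powerset, (if F ⊆ E then p ^ E.card * (1 - p) ^ (A.card - E.card) else 0)
      = p ^ F.card := by
  rw [← Finset.sum_filter]
  have key : ∑ E ∈ A.powerset.filter (fun E => F ⊆ E),
      p ^ E.card * (1 - p) ^ (A.card - E.card)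
      = ∑ E' ∈ (A \ F).powerset,
        p ^ F.card * (p ^ E'.card * (1 - p) ^ ((A \ F).card - E'.card)) := by
    refine Finset.sum_bij' (fun E _ => E \ F) (fun E' _ => E' ∪ F) ?_ ?_ ?_ ?_ ?_
    · intro E hE
      rw [Finset.mem_filter, Finset.mem_powerset] at hE
      exact Finset.mem_powerset.2 (Finset.sdiff_subset_sdiff hE.1 le_rfl)
    · intro E' hE'
      rw [Finset.mem_powerset] at hE'
      refine Finset.mem_filter.2 ⟨Finset.mem_powerset.2 ?_, Finset.subset_union_right⟩
      exact Finset.union_subset (hE'.trans (Finset.sdiff_subset)) hF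
    · intro E hE
      rw [Finset.mem_filter] at hE
      exact Finset.sdiff_union_of_subset hE.2
    · intro E' hE'
      rw [Finset.mem_powerset] at hE'
      have : Disjoint E' F := Finset.disjoint_of_subset_left hE' Finset.sdiff_disjoint
      exact Finset.union_sdiff_cancel_right this
    · intro E hE
      rw [Finset.mem_filter, Finset.mem_powerset] at hE
      have hFE : F.card ≤ E.card := Finset.card_le_card hE.2
      have hcard : (E \ F).card = E.card - F.card := Finset.card_sdiff_of_subset hE.2
      have hAF : (A \ F).card = A.card - F.card := Finset.card_sdiff_of_subset hF
      simp only [hcard, hAF]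
      have h1 : A.card - E.card = A.card - F.card - (E.card - F.card) := by omega
      have h2 : E.card = F.card + (E.card - F.card) := by omega
      rw [h1, ← mul_assoc, ← pow_add, ← h2]
  rw [key, ← Finset.mul_sum, sum_bern, mul_one]

lemma sum_event {α : Type*} [DecidableEq α] {p : ℝ} (hp0 : 0 ≤ p) (hp1 : p ≤ 1)
    {A B : Finset α} (hB : B ⊆ A) (m : ℕ) :
    ∑ E ∈ A.powerset,
        (if m ≤ (E ∩ B).card then p ^ E.card * (1 - p) ^ (A.card - E.card) else 0)
      ≤ (B.card.choose m : ℝ) * p ^ m := by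
  have hw : ∀ E : Finset α, 0 ≤ p ^ E.card * (1 - p) ^ (A.card - E.card) := fun E =>
    mul_nonneg (pow_nonneg hp0 _) (pow_nonneg (by linarith) _)
  have step : ∀ E ∈ A.powerset,
      (if m ≤ (E ∩ B).card then p ^ E.card * (1 - p) ^ (A.card - E.card) else 0)
        ≤ ∑ F ∈ Finset.powersetCard m B,
            (if F ⊆ E then p ^ E.card * (1 - p) ^ (A.card - E.card) else 0) := by
    intro E _
    by_cases h : m ≤ (E ∩ B).card
    · obtain ⟨F, hFsub, hFcard⟩ := Finset.exists_subset_card_eq h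
      have hFmem : F ∈ Finset.powersetCard m B :=
        Finset.mem_powersetCard.2 ⟨hFsub.trans Finset.inter_subset_right, hFcard⟩
      rw [if_pos h]
      have := Finset.single_le_sum (f := fun F : Finset α =>
          if F ⊆ E then p ^ E.card * (1 - p) ^ (A.card - E.card) else 0)
        (fun F _ => by split_ifs; exacts [hw E, le_rfl]) hFmem
      simpa only [if_pos (hFsub.trans Finset.inter_subset_left)] using this
    · rw [if_neg h]
      exact Finset.sum_nonneg fun F _ => by split_ifs; exacts [hw E, le_rfl]
  calc ∑ E ∈ A.powerset,
        (if m ≤ (E ∩ B).card then p ^ E.card * (1 - p) ^ (A.card - E.card) else 0)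
      ≤ ∑ E ∈ A.powerset, ∑ F ∈ Finset.powersetCard m B,
          (if F ⊆ E then p ^ E.card * (1 - p) ^ (A.card - E.card) else 0) :=
        Finset.sum_le_sum step
    _ = ∑ F ∈ Finset.powersetCard m B, ∑ E ∈ A.powerset,
          (if F ⊆ E then p ^ E.card * (1 - p) ^ (A.card - E.card) else 0) :=
        Finset.sum_comm
    _ = ∑ F ∈ Finset.powersetCard m B, p ^ F.card := by
        refine Finset.sum_congr rfl fun F hF => ?_
        exact sum_cyl p ((Finset.mem_powersetCard.1 hF).1.trans hB)
    _ = (B.card.choose m : ℝ) * p ^ m := by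
        rw [Finset.sum_congr rfl fun F hF => by
          rw [(Finset.mem_powersetCard.1 hF).2], Finset.sum_const,
          Finset.card_powersetCard, nsmul_eq_mul]

lemma pow_self_le_three_pow_mul_factorial (m : ℕ) :
    (m : ℝ) ^ m ≤ 3 ^ m * m.factorial := by
  induction m with
  | zero => norm_num
  | succ m ih =>
    have hstep : ((m + 1 : ℕ) : ℝ) ^ m ≤ 3 * (m : ℝ) ^ m := by
      rcases Nat.eq_zero_or_pos m with hm | hm
      · subst hm; norm_num
      · have hm' : (0:ℝ) < m := by exact_mod_cast hm
        have h1 : ((m + 1 : ℕ) : ℝ) = (m : ℝ) * (1 + 1 / m) := by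
          field_simp
          exact Nat.cast_succ m
        have h2 : (1 + 1 / (m:ℝ)) ^ m ≤ 3 := by
          have := Real.add_one_le_exp (1 / (m:ℝ))
          calc (1 + 1 / (m:ℝ)) ^ m ≤ (Real.exp (1 / m)) ^ m := by
                apply pow_le_pow_left₀ (by positivity) (by linarith)
            _ = Real.exp ((1/m) * m) := by rw [← Real.exp_nat_mul]; ring_nf
            _ = Real.exp 1 := by rw [one_div, inv_mul_cancel₀ hm'.ne']
            _ ≤ 3 := by
                have := Real.exp_one_lt_d9
                linarith
        calc ((m + 1 : ℕ) : ℝ) ^ m = (m:ℝ) ^ m * (1 + 1/m) ^ m := by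
              rw [h1, mul_pow]
          _ ≤ (m:ℝ) ^ m * 3 := by
              apply mul_le_mul_of_nonneg_left h2 (by positivity)
          _ = 3 * (m:ℝ)^m := by ring
    calc ((m + 1 : ℕ) : ℝ) ^ (m + 1) = ((m+1:ℕ):ℝ) * ((m+1:ℕ):ℝ) ^ m := by ring
      _ ≤ ((m+1:ℕ):ℝ) * (3 * (m:ℝ)^m) := by
          apply mul_le_mul_of_nonneg_left hstep (by positivity)
      _ ≤ ((m+1:ℕ):ℝ) * (3 * (3^m * m.factorial)) := by
          apply mul_le_mul_of_nonneg_left (by apply mul_le_mul_of_nonneg_left ih (by norm_num)) (by positivity)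
      _ = 3 ^ (m+1) * (((m+1) * m.factorial : ℕ) : ℝ) := by
          push_cast; ring
      _ = 3 ^ (m+1) * (m+1).factorial := by rw [Nat.factorial_succ]

lemma choose_sq_le {b s : ℕ} (hb : b ≤ s ^ 2) :
    (b.choose (s + 1) : ℝ) ≤ (3 * s) ^ (s + 1) := by
  have h1 : (b.choose (s+1) : ℝ) ≤ ((s^2).choose (s+1) : ℝ) := by
    exact_mod_cast Nat.choose_le_choose (s+1) hb
  have h2 : ((s^2).choose (s+1) : ℝ) ≤ ((s^2 : ℕ):ℝ)^(s+1) / ((s+1).factorial : ℝ) :=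
    Nat.choose_le_pow_div (s+1) (s^2)
  have hfac : ((s:ℝ)+1) ^ (s+1) ≤ 3 ^ (s+1) * (s+1).factorial := by
    have := pow_self_le_three_pow_mul_factorial (s+1)
    push_cast at this ⊢
    convert this using 2
  have hfpos : (0:ℝ) < (s+1).factorial := by positivity
  have h3 : ((s^2 : ℕ):ℝ)^(s+1) / ((s+1).factorial : ℝ) ≤ (3*s)^(s+1) := by
    rw [div_le_iff₀ hfpos]
    push_cast
    calc ((s:ℝ)^2)^(s+1) = ((s:ℝ)*s)^(s+1) := by ring
      _ ≤ ((s:ℝ)*(s+1))^(s+1) := by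
          apply pow_le_pow_left₀ (by positivity)
          nlinarith [Nat.cast_nonneg (α := ℝ) s]
      _ = (s:ℝ)^(s+1) * ((s:ℝ)+1)^(s+1) := by rw [mul_pow]
      _ ≤ (s:ℝ)^(s+1) * (3^(s+1) * (s+1).factorial) := by
          apply mul_le_mul_of_nonneg_left hfac (by positivity)
      _ = (3*(s:ℝ))^(s+1) * (s+1).factorial := by rw [mul_pow]; ring
  calc (b.choose (s + 1) : ℝ) ≤ _ := h1
    _ ≤ _ := h2
    _ ≤ _ := h3

lemma card_BS (n : ℕ) (S : Finset (Fin n)) :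
    ((allEdges n).filter (fun e => ∀ x ∈ e, x ∈ S)).card ≤ S.card ^ 2 := by
  have hsub : (allEdges n).filter (fun e => ∀ x ∈ e, x ∈ S)
      ⊆ (S ×ˢ S).image (fun z => s(z.1, z.2)) := by
    intro e
    refine Sym2.ind (fun x y he => ?_) e
    rw [Finset.mem_filter] at he
    have hx : x ∈ S := he.2 x (Sym2.mem_mk_left x y)
    have hy : y ∈ S := he.2 y (Sym2.mem_mk_right x y)
    exact Finset.mem_image.2 ⟨(x, y), Finset.mem_product.2 ⟨hx, hy⟩, rfl⟩
  calc ((allEdges n).filter (fun e => ∀ x ∈ e, x ∈ S)).card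
      ≤ ((S ×ˢ S).image (fun z => s(z.1, z.2))).card := Finset.card_le_card hsub
    _ ≤ (S ×ˢ S).card := Finset.card_image_le
    _ = S.card ^ 2 := by rw [Finset.card_product, sq]

set_option maxHeartbeats 1000000 in
/-- (Lemma 6.1.)  There is `d₀ > 0` such that for every `d ≥ d₀` and all sufficiently
large `n`, the probability that the Erdős–Rényi random graph `G(n, d/n)` (each
non-diagonal pair is an edge independently with probability `d/n`) contains a vertex
set `S` with `1 ≤ |S| ≤ (2/9) log n / log d` spanning at least `|S| + 1` edges is at
most `n ^ (-2/3)`.  The probability is written as a sum over all edge sets `E`,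
weighted by `(d/n)^{|E|} (1 - d/n)^{|allEdges| - |E|}`. -/
theorem gnp_dense_subset_prob_le :
    ∃ d0 : ℝ, 0 < d0 ∧ ∀ d : ℝ, d0 ≤ d → ∃ n0 : ℕ, ∀ n : ℕ, n0 ≤ n →
      (∑ E ∈ (allEdges n).powerset,
          if BadGraph n d E then
            (d / (n : ℝ)) ^ E.card * (1 - d / (n : ℝ)) ^ ((allEdges n).card - E.card)
          else 0) ≤ (n : ℝ) ^ (-(2 / 3 : ℝ)) := by
  refine ⟨(9:ℝ)^(9:ℕ), by norm_num, fun d hd => ?_⟩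
  have hd1 : (1:ℝ) < d := lt_of_lt_of_le (by norm_num) hd
  have hd0' : (0:ℝ) < d := by linarith
  have hlog9 : (1:ℝ) ≤ Real.log 9 := by
    have h9 : Real.exp 1 ≤ 9 := le_of_lt (lt_of_lt_of_le Real.exp_one_lt_d9 (by norm_num))
    calc (1:ℝ) = Real.log (Real.exp 1) := (Real.log_exp 1).symm
      _ ≤ Real.log 9 := Real.log_le_log (Real.exp_pos 1) h9
  have hlogd9 : 9 * Real.log 9 ≤ Real.log d := by
    calc 9 * Real.log 9 = Real.log ((9:ℝ)^(9:ℕ)) := by rw [Real.log_pow]; push_cast; ring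
      _ ≤ Real.log d := Real.log_le_log (by norm_num) hd
  have hlogd : (9:ℝ) ≤ Real.log d := le_trans (by linarith) hlogd9
  have hlogdpos : (0:ℝ) < Real.log d := by linarith
  have hev : ∀ᶠ x : ℝ in Filter.atTop,
      ‖Real.log x ^ (2:ℝ)‖ ≤ (1/(3*d)) * ‖x ^ ((7:ℝ)/81)‖ :=
    (isLittleO_log_rpow_rpow_atTop 2 (by norm_num)).def (by positivity)
  obtain ⟨x0, hx0⟩ := Filter.eventually_atTop.1 hev
  refine ⟨max (max 2 ⌈d⌉₊) ⌈x0⌉₊, fun n hn => ?_⟩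
  have hn2 : 2 ≤ n := le_trans (le_trans (le_max_left _ _) (le_max_left _ _)) hn
  have hnd : d ≤ (n:ℝ) := by
    have h1 : ⌈d⌉₊ ≤ n := le_trans (le_trans (le_max_right _ _) (le_max_left _ _)) hn
    exact le_trans (Nat.le_ceil d) (by exact_mod_cast h1)
  have hx0n : x0 ≤ (n:ℝ) := by
    have h1 : ⌈x0⌉₊ ≤ n := le_trans (le_max_right _ _) hn
    exact le_trans (Nat.le_ceil x0) (by exact_mod_cast h1)
  have hn0R : (0:ℝ) < n := by positivity
  have hn1R : (1:ℝ) ≤ n := by exact_mod_cast le_trans (by norm_num) hn2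
  have hlognn : (0:ℝ) ≤ Real.log n := Real.log_nonneg hn1R
  set p := d / (n:ℝ) with hp_def
  have hp0 : 0 ≤ p := by positivity
  have hp1 : p ≤ 1 := (div_le_one hn0R).2 hnd
  set k := (2/9 : ℝ) * Real.log n / Real.log d with hk_def
  have hk0 : 0 ≤ k := by positivity
  set M := ⌊k⌋₊ with hM_def
  set A := allEdges n with hA_def
  set B : Finset (Fin n) → Finset (Sym2 (Fin n)) :=
    fun S => (allEdges n).filter (fun e => ∀ x ∈ e, x ∈ S) with hB_def
  set 𝒮 := (Finset.Icc 1 M).biUnion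
    (fun s => Finset.powersetCard s (Finset.univ : Finset (Fin n))) with h𝒮_def
  have hw : ∀ E : Finset (Sym2 (Fin n)),
      0 ≤ p ^ E.card * (1 - p) ^ (A.card - E.card) := fun E =>
    mul_nonneg (pow_nonneg hp0 _) (pow_nonneg (by linarith) _)
  -- Step A : union bound
  have stepA : (∑ E ∈ A.powerset,
        if BadGraph n d E then p ^ E.card * (1 - p) ^ (A.card - E.card) else 0)
      ≤ ∑ S ∈ 𝒮, ∑ E ∈ A.powerset,
          (if S.card + 1 ≤ (E ∩ B S).card then p ^ E.card * (1 - p) ^ (A.card - E.card) else 0) := by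
    rw [Finset.sum_comm]
    refine Finset.sum_le_sum fun E hE => ?_
    by_cases hbad : BadGraph n d E
    · rw [if_pos hbad]
      obtain ⟨S, hS1, hSk, hSE⟩ := hbad
      have hSM : S.card ≤ M := Nat.le_floor hSk
      have hSmem : S ∈ 𝒮 := Finset.mem_biUnion.2
        ⟨S.card, Finset.mem_Icc.2 ⟨hS1, hSM⟩,
          Finset.mem_powersetCard.2 ⟨Finset.subset_univ S, rfl⟩⟩
      have hEA : E ⊆ allEdges n := Finset.mem_powerset.1 hE
      have hEfilter : E.filter (fun e => ∀ x ∈ e, x ∈ S) = E ∩ B S := by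
        ext e
        simp only [hB_def, Finset.mem_filter, Finset.mem_inter]
        constructor
        · rintro ⟨he, hP⟩; exact ⟨he, hEA he, hP⟩
        · rintro ⟨he, _, hP⟩; exact ⟨he, hP⟩
      have hcond : S.card + 1 ≤ (E ∩ B S).card := by rw [← hEfilter]; exact hSE
      have := Finset.single_le_sum (f := fun S : Finset (Fin n) =>
          if S.card + 1 ≤ (E ∩ B S).card then p ^ E.card * (1 - p) ^ (A.card - E.card) else 0)
        (fun S _ => by split_ifs; exacts [hw E, le_rfl]) hSmem
      simpa only [if_pos hcond] using this
    · rw [if_neg hbad]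
      exact Finset.sum_nonneg fun S _ => by split_ifs; exacts [hw E, le_rfl]
  -- Step B+C : per-S bound
  have stepBC : ∀ S ∈ 𝒮,
      (∑ E ∈ A.powerset,
          (if S.card + 1 ≤ (E ∩ B S).card then p ^ E.card * (1 - p) ^ (A.card - E.card) else 0))
        ≤ (3 * (S.card:ℝ)) ^ (S.card + 1) * p ^ (S.card + 1) := by
    intro S _
    have hBsub : B S ⊆ A := Finset.filter_subset _ _
    refine (sum_event hp0 hp1 hBsub (S.card + 1)).trans ?_
    have h2 : ((B S).card.choose (S.card + 1) : ℝ) ≤ (3 * (S.card:ℝ)) ^ (S.card + 1) :=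
      choose_sq_le (card_BS n S)
    exact mul_le_mul_of_nonneg_right h2 (pow_nonneg hp0 _)
  -- Step D : group by cardinality
  have hdisj : (↑(Finset.Icc 1 M) : Set ℕ).PairwiseDisjoint
      (fun s => Finset.powersetCard s (Finset.univ : Finset (Fin n))) := by
    intro a _ b _ hab
    refine Finset.disjoint_left.2 fun S hSa hSb => hab ?_
    rw [← (Finset.mem_powersetCard.1 hSa).2, ← (Finset.mem_powersetCard.1 hSb).2]
  have stepD : ∑ S ∈ 𝒮, (3 * (S.card:ℝ)) ^ (S.card + 1) * p ^ (S.card + 1)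
      = ∑ s ∈ Finset.Icc 1 M, (n.choose s : ℝ) * ((3 * (s:ℝ)) ^ (s + 1) * p ^ (s + 1)) := by
    rw [h𝒮_def, Finset.sum_biUnion hdisj]
    refine Finset.sum_congr rfl fun s _ => ?_
    rw [Finset.sum_congr rfl (fun S hS => by
      rw [(Finset.mem_powersetCard.1 hS).2]), Finset.sum_const,
      Finset.card_powersetCard, Finset.card_univ, Fintype.card_fin, nsmul_eq_mul]
  -- Step E : per-cardinality bound
  have stepE : ∀ s ∈ Finset.Icc 1 M,
      (n.choose s : ℝ) * ((3 * (s:ℝ)) ^ (s + 1) * p ^ (s + 1))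
        ≤ 3 ^ (2 * M + 1) * M * d ^ (M + 1) / n := by
    intro s hs
    obtain ⟨hs1, hsM⟩ := Finset.mem_Icc.1 hs
    have hsR : (1:ℝ) ≤ (s:ℝ) := by exact_mod_cast hs1
    have hspos : (0:ℝ) < (s:ℝ) := by linarith
    have hfacpos : (0:ℝ) < (s.factorial : ℝ) := by positivity
    have hchoose : (n.choose s : ℝ) ≤ 3 ^ s * (n:ℝ) ^ s / (s:ℝ) ^ s := by
      have h1 : (n.choose s : ℝ) ≤ (n:ℝ)^s / (s.factorial : ℝ) :=
        Nat.choose_le_pow_div s n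
      have h2 : (n:ℝ)^s / (s.factorial : ℝ) ≤ 3 ^ s * (n:ℝ) ^ s / (s:ℝ) ^ s := by
        rw [div_le_div_iff₀ hfacpos (by positivity)]
        push_cast
        calc (n:ℝ)^s * (s:ℝ)^s ≤ (n:ℝ)^s * (3^s * s.factorial) :=
              mul_le_mul_of_nonneg_left (pow_self_le_three_pow_mul_factorial s) (by positivity)
          _ = 3^s * (n:ℝ)^s * s.factorial := by ring
      exact h1.trans h2
    have key : (3:ℝ) ^ s * (n:ℝ) ^ s / (s:ℝ) ^ s * ((3 * (s:ℝ)) ^ (s + 1) * p ^ (s + 1))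
        = 3 ^ (2 * s + 1) * s * d ^ (s + 1) / n := by
      rw [hp_def, div_pow, mul_pow]
      field_simp
      ring
    calc (n.choose s : ℝ) * ((3 * (s:ℝ)) ^ (s + 1) * p ^ (s + 1))
        ≤ 3 ^ s * (n:ℝ) ^ s / (s:ℝ) ^ s * ((3 * (s:ℝ)) ^ (s + 1) * p ^ (s + 1)) := by
          apply mul_le_mul_of_nonneg_right hchoose
          positivity
      _ = 3 ^ (2 * s + 1) * s * d ^ (s + 1) / n := key
      _ ≤ 3 ^ (2 * M + 1) * M * d ^ (M + 1) / n := by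
          gcongr
          · norm_num
          · exact hd1.le

  -- sum of the per-cardinality bounds
  have stepSum : ∑ s ∈ Finset.Icc 1 M, (n.choose s : ℝ) * ((3 * (s:ℝ)) ^ (s + 1) * p ^ (s + 1))
      ≤ (M:ℝ) * (3 ^ (2 * M + 1) * M * d ^ (M + 1) / n) := by
    calc ∑ s ∈ Finset.Icc 1 M, (n.choose s : ℝ) * ((3 * (s:ℝ)) ^ (s + 1) * p ^ (s + 1))
        ≤ ∑ _s ∈ Finset.Icc 1 M, (3:ℝ) ^ (2 * M + 1) * M * d ^ (M + 1) / n :=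
          Finset.sum_le_sum stepE
      _ = (M:ℝ) * (3 ^ (2 * M + 1) * M * d ^ (M + 1) / n) := by
          rw [Finset.sum_const, Nat.card_Icc, nsmul_eq_mul]
          norm_num
  -- analytic estimates
  have hMk : (M:ℝ) ≤ k := Nat.floor_le hk0
  have hklogn : k ≤ Real.log n := by
    have h1 : (2/9 : ℝ) * Real.log n / Real.log d ≤ 2/9 * Real.log n / 9 :=
      div_le_div_of_nonneg_left (by positivity) (by norm_num) hlogd
    rw [hk_def]
    linarith
  have hlog2 : 3 * d * (Real.log n)^2 ≤ (n:ℝ) ^ ((7:ℝ)/81) := by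
    have h := hx0 n hx0n
    rw [Real.norm_eq_abs, Real.norm_eq_abs] at h
    have hlx : Real.log n ^ (2:ℝ) = (Real.log n)^2 := by
      rw [show (2:ℝ) = ((2:ℕ):ℝ) by norm_num, Real.rpow_natCast]
    rw [hlx, abs_of_nonneg (by positivity : (0:ℝ) ≤ (Real.log n)^2),
      abs_of_nonneg (Real.rpow_nonneg hn0R.le _)] at h
    have h3d : (0:ℝ) < 3 * d := by linarith
    calc 3 * d * (Real.log n)^2 ≤ 3 * d * (1/(3*d) * (n:ℝ) ^ ((7:ℝ)/81)) :=
          mul_le_mul_of_nonneg_left h h3d.le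
      _ = (n:ℝ) ^ ((7:ℝ)/81) := by field_simp
  have h9dk : ((9*d):ℝ)^M ≤ (n:ℝ) ^ ((20:ℝ)/81) := by
    have e1 : ((9*d):ℝ)^M = (9*d) ^ ((M:ℕ):ℝ) := (Real.rpow_natCast _ M).symm
    have e2 : ((9*d):ℝ) ^ ((M:ℕ):ℝ) ≤ (9*d) ^ k :=
      Real.rpow_le_rpow_of_exponent_le (by linarith) hMk
    have e3 : ((9*d):ℝ) ^ k ≤ (n:ℝ) ^ ((20:ℝ)/81) := by
      rw [Real.rpow_def_of_pos (by linarith : (0:ℝ) < 9*d), Real.rpow_def_of_pos hn0R]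
      apply Real.exp_le_exp.2
      have hlog9d : Real.log (9*d) = Real.log 9 + Real.log d :=
        Real.log_mul (by norm_num) (ne_of_gt hd0')
      have hq : Real.log 9 / Real.log d ≤ 1/9 := by
        rw [div_le_div_iff₀ hlogdpos (by norm_num)]; linarith
      have hexpand : (Real.log 9 + Real.log d) * (2/9 * Real.log n / Real.log d)
          = 2/9 * Real.log n * (Real.log 9 / Real.log d) + 2/9 * Real.log n := by
        field_simp
      rw [hlog9d, hk_def, hexpand]
      nlinarith [mul_le_mul_of_nonneg_left hq (by positivity : (0:ℝ) ≤ 2/9 * Real.log n)]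
    rw [e1]
    exact e2.trans e3
  have hM2 : (M:ℝ)^2 ≤ (Real.log n)^2 :=
    pow_le_pow_left₀ (Nat.cast_nonneg M) (hMk.trans hklogn) 2
  have hnum : 3 * (M:ℝ)^2 * ((9*d)^M * d) ≤ (n:ℝ) ^ ((1:ℝ)/3) := by
    calc 3 * (M:ℝ)^2 * ((9*d)^M * d) = (3 * d * (M:ℝ)^2) * (9*d)^M := by ring
      _ ≤ (3 * d * (Real.log n)^2) * (n:ℝ) ^ ((20:ℝ)/81) := by
          have hleft : 3 * d * (M:ℝ)^2 ≤ 3 * d * (Real.log n)^2 :=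
            mul_le_mul_of_nonneg_left hM2 (by positivity)
          exact mul_le_mul hleft h9dk (by positivity) (by positivity)
      _ ≤ (n:ℝ) ^ ((7:ℝ)/81) * (n:ℝ) ^ ((20:ℝ)/81) :=
          mul_le_mul_of_nonneg_right hlog2 (Real.rpow_nonneg hn0R.le _)
      _ = (n:ℝ) ^ ((1:ℝ)/3) := by
          rw [← Real.rpow_add hn0R]; norm_num
  have hfin : (M:ℝ) * (3 ^ (2*M+1) * M * d ^ (M+1) / n) ≤ (n:ℝ) ^ (-(2/3 : ℝ)) := by
    have e : (M:ℝ) * (3 ^ (2*M+1) * M * d ^ (M+1) / n) = 3 * (M:ℝ)^2 * ((9*d)^M * d) / n := by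
      have h9 : (3:ℝ)^(2*M+1) = 9^M * 3 := by rw [pow_succ, pow_mul]; norm_num
      rw [h9, pow_succ d, mul_pow]
      ring
    have e2 : (n:ℝ) ^ (-(2/3 : ℝ)) = (n:ℝ) ^ ((1:ℝ)/3) / n := by
      rw [eq_div_iff (ne_of_gt hn0R)]
      nth_rewrite 2 [← Real.rpow_one (n:ℝ)]
      rw [← Real.rpow_add hn0R]
      norm_num
    rw [e, e2]
    gcongr
  calc (∑ E ∈ A.powerset,
        if BadGraph n d E then p ^ E.card * (1 - p) ^ (A.card - E.card) else 0)
      ≤ ∑ S ∈ 𝒮, ∑ E ∈ A.powerset,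
          (if S.card + 1 ≤ (E ∩ B S).card then p ^ E.card * (1 - p) ^ (A.card - E.card) else 0) :=
        stepA
    _ ≤ ∑ S ∈ 𝒮, (3 * (S.card:ℝ)) ^ (S.card + 1) * p ^ (S.card + 1) :=
        Finset.sum_le_sum stepBC
    _ = ∑ s ∈ Finset.Icc 1 M, (n.choose s : ℝ) * ((3 * (s:ℝ)) ^ (s + 1) * p ^ (s + 1)) := stepD
    _ ≤ (M:ℝ) * (3 ^ (2 * M + 1) * M * d ^ (M + 1) / n) := stepSum
    _ ≤ (n:ℝ) ^ (-(2/3 : ℝ)) := hfin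
end
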